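/- arXiv:2510.12905 — 2 statements merged into one kernel-verified Lean document; each statement's English description precedes it below -/
import Mathlib

section
/- Let H be a Hopf algebra with invertible antipode s, and define T(x⊗y) = x₍₁₎ ⊗ x₍₂₎y and S(x⊗y) = x₍₁₎ ⊗ y·s⁻¹(x₍₂₎) on H⊗H. Then the pair (T,S) satisfies the three compatibility relations: (i) T₁₃S₂₃ = S₂₃T₁₃, (ii) T₂₃T₁₃S₁₂ = S₁₂T₂₃, and (iii) T₁₂S₁₃S₂₃ = S₂₃T₁₂, as equalities of maps H⊗H⊗H → H⊗H⊗H. -/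
open scoped TensorProduct

variable (k : Type*) [Field k] (H : Type*) [Semiring H] [HopfAlgebra k H]

/-- `F` acting on tensor factors 1,2 of `H ⊗ (H ⊗ H)`. -/
noncomputable def op12 (F : H ⊗[k] H →ₗ[k] H ⊗[k] H) :
    H ⊗[k] (H ⊗[k] H) →ₗ[k] H ⊗[k] (H ⊗[k] H) :=
  (TensorProduct.assoc k H H H).toLinearMap ∘ₗ LinearMap.rTensor H F ∘ₗ
    (TensorProduct.assoc k H H H).symm.toLinearMap

/-- `F` acting on tensor factors 2,3 of `H ⊗ (H ⊗ H)`. -/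
noncomputable def op23 (F : H ⊗[k] H →ₗ[k] H ⊗[k] H) :
    H ⊗[k] (H ⊗[k] H) →ₗ[k] H ⊗[k] (H ⊗[k] H) :=
  LinearMap.lTensor H F

/-- the flip of tensor factors 2,3 of `H ⊗ (H ⊗ H)`. -/
noncomputable def sw23 : H ⊗[k] (H ⊗[k] H) →ₗ[k] H ⊗[k] (H ⊗[k] H) :=
  LinearMap.lTensor H (TensorProduct.comm k H H).toLinearMap

/-- `F` acting on tensor factors 1,3 of `H ⊗ (H ⊗ H)`. -/
noncomputable def op13 (F : H ⊗[k] H →ₗ[k] H ⊗[k] H) :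
    H ⊗[k] (H ⊗[k] H) →ₗ[k] H ⊗[k] (H ⊗[k] H) :=
  sw23 k H ∘ₗ op12 k H F ∘ₗ sw23 k H

/-- The pentagon equation `T₁₂T₁₃T₂₃ = T₂₃T₁₂` on `H ⊗ (H ⊗ H)`. -/
def PentagonEq (T : H ⊗[k] H →ₗ[k] H ⊗[k] H) : Prop :=
  op12 k H T ∘ₗ op13 k H T ∘ₗ op23 k H T = op23 k H T ∘ₗ op12 k H T

/-- The dual pentagon equation `S₂₃S₁₃S₁₂ = S₁₂S₂₃` on `H ⊗ (H ⊗ H)`. -/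
def DualPentagonEq (S : H ⊗[k] H →ₗ[k] H ⊗[k] H) : Prop :=
  op23 k H S ∘ₗ op13 k H S ∘ₗ op12 k H S = op12 k H S ∘ₗ op23 k H S

/-- `T(x ⊗ y) = x₍₁₎ ⊗ x₍₂₎y`. -/
noncomputable def Tmap : H ⊗[k] H →ₗ[k] H ⊗[k] H :=
  LinearMap.lTensor H (LinearMap.mul' k H) ∘ₗ (TensorProduct.assoc k H H H).toLinearMap ∘ₗ
    LinearMap.rTensor H (Coalgebra.comul (R := k) (A := H))

/-- `S(x ⊗ y) = x₍₁₎ ⊗ y·s'(x₍₂₎)`, where `s'` is the inverse of the antipode. -/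
noncomputable def Smap (s' : H →ₗ[k] H) : H ⊗[k] H →ₗ[k] H ⊗[k] H :=
  LinearMap.lTensor H
      (LinearMap.mul' k H ∘ₗ (TensorProduct.comm k H H).toLinearMap ∘ₗ LinearMap.rTensor H s') ∘ₗ
    (TensorProduct.assoc k H H H).toLinearMap ∘ₗ
    LinearMap.rTensor H (Coalgebra.comul (R := k) (A := H))


section AuxHopfProof
variable {k} {H}
open TensorProduct LinearMap Coalgebra HopfAlgebra

local notation "Δ" => Coalgebra.comul (R := k) (A := H)
local notation "ε" => Coalgebra.counit (R := k) (A := H)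
local notation "μ" => LinearMap.mul' k H
local notation "σ" => (HopfAlgebra.antipode k : H →ₗ[k] H)

lemma sum_repr {M : Type*} [AddCommMonoid M] [Module k M] (ψ : H ⊗[k] H →ₗ[k] M)
    {x : H} (r : Coalgebra.Repr k x (H × H)) :
    ∑ i ∈ r.index, ψ (r.left i ⊗ₜ[k] r.right i) = ψ (Δ x) := by
  rw [← r.eq, map_sum]

lemma K1 {x : H} (r : Coalgebra.Repr k x (H × H)) :
    ∑ i ∈ r.index, ε (r.left i) • r.right i = x := by
  have h := congrArg (TensorProduct.lid k H) (Coalgebra.sum_counit_tmul_eq r)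
  rw [map_sum] at h
  simp only [TensorProduct.lid_tmul, one_smul] at h
  exact h

lemma K2 {x : H} (r : Coalgebra.Repr k x (H × H)) :
    ∑ i ∈ r.index, ε (r.right i) • r.left i = x := by
  have h := congrArg (TensorProduct.rid k H) (Coalgebra.sum_tmul_counit_eq r)
  rw [map_sum] at h
  simp only [TensorProduct.rid_tmul, one_smul] at h
  exact h

noncomputable def Delta3Map : H →ₗ[k] H ⊗[k] (H ⊗[k] H) := (LinearMap.lTensor H Δ) ∘ₗ Δ

noncomputable def Delta3 (x : H) : H ⊗[k] (H ⊗[k] H) := LinearMap.lTensor H Δ (Δ x)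

lemma Delta3Map_apply (x : H) : (Delta3Map x : H ⊗[k] (H ⊗[k] H)) = Delta3 x := rfl

noncomputable def Delta4 (x : H) : H ⊗[k] (H ⊗[k] (H ⊗[k] H)) :=
  LinearMap.lTensor H (LinearMap.lTensor H Δ) (Delta3 x)

lemma Delta4_eq (x : H) :
    (Delta4 x : H ⊗[k] (H ⊗[k] (H ⊗[k] H))) = LinearMap.lTensor H Delta3Map (Δ x) := by
  rw [Delta4, Delta3, ← LinearMap.comp_apply, ← LinearMap.lTensor_comp]; rfl

lemma sum3R {M : Type*} [AddCommMonoid M] [Module k M] (ψ : H ⊗[k] (H ⊗[k] H) →ₗ[k] M)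
    {x : H} (r : Coalgebra.Repr k x (H × H)) (rr : ∀ i, Coalgebra.Repr k (r.right i) (H × H)) :
    ∑ i ∈ r.index, ∑ j ∈ (rr i).index,
      ψ (r.left i ⊗ₜ[k] ((rr i).left j ⊗ₜ[k] (rr i).right j))
      = ψ (Delta3 x) := by
  rw [Delta3, ← r.eq, map_sum, map_sum]
  refine Finset.sum_congr rfl fun i _ => ?_
  rw [LinearMap.lTensor_tmul, ← (rr i).eq, TensorProduct.tmul_sum, map_sum]

lemma sum3L {M : Type*} [AddCommMonoid M] [Module k M] (ψ : H ⊗[k] (H ⊗[k] H) →ₗ[k] M)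
    {x : H} (r : Coalgebra.Repr k x (H × H)) (rl : ∀ i, Coalgebra.Repr k (r.left i) (H × H)) :
    ∑ i ∈ r.index, ∑ j ∈ (rl i).index,
      ψ ((rl i).left j ⊗ₜ[k] ((rl i).right j ⊗ₜ[k] r.right i))
      = ψ (Delta3 x) := by
  have key : ∑ i ∈ r.index, ∑ j ∈ (rl i).index,
      ((rl i).left j ⊗ₜ[k] ((rl i).right j ⊗ₜ[k] r.right i)) = Delta3 x := by
    have h1 : ∑ i ∈ r.index, ∑ j ∈ (rl i).index,
        ((rl i).left j ⊗ₜ[k] ((rl i).right j ⊗ₜ[k] r.right i))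
        = (TensorProduct.assoc k H H H) ((Δ).rTensor H (Δ x)) := by
      rw [← r.eq, map_sum, map_sum]
      refine Finset.sum_congr rfl fun i _ => ?_
      rw [LinearMap.rTensor_tmul, ← (rl i).eq, TensorProduct.sum_tmul, map_sum]
      refine Finset.sum_congr rfl fun j _ => ?_
      rfl
    rw [h1, Coalgebra.coassoc_apply]; rfl
  rw [← key, map_sum]
  exact Finset.sum_congr rfl fun i _ => by rw [map_sum]

lemma transportLR {M : Type*} [AddCommMonoid M] [Module k M] (ψ : H ⊗[k] (H ⊗[k] H) →ₗ[k] M)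
    {x : H} (r : Coalgebra.Repr k x (H × H)) (rl : ∀ i, Coalgebra.Repr k (r.left i) (H × H))
    (rr : ∀ i, Coalgebra.Repr k (r.right i) (H × H)) :
    ∑ i ∈ r.index, ∑ j ∈ (rl i).index,
      ψ ((rl i).left j ⊗ₜ[k] ((rl i).right j ⊗ₜ[k] r.right i))
      = ∑ i ∈ r.index, ∑ j ∈ (rr i).index,
      ψ (r.left i ⊗ₜ[k] ((rr i).left j ⊗ₜ[k] (rr i).right j)) :=
  (sum3L ψ r rl).trans (sum3R ψ r rr).symm

lemma sum4_22 {M : Type*} [AddCommMonoid M] [Module k M]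
    (ψ : H ⊗[k] (H ⊗[k] (H ⊗[k] H)) →ₗ[k] M)
    {x : H} (r : Coalgebra.Repr k x (H × H)) (rl : ∀ i, Coalgebra.Repr k (r.left i) (H × H))
    (rr : ∀ i, Coalgebra.Repr k (r.right i) (H × H)) :
    ∑ i ∈ r.index, ∑ p ∈ (rl i).index, ∑ m ∈ (rr i).index,
      ψ ((rl i).left p ⊗ₜ[k] ((rl i).right p ⊗ₜ[k] ((rr i).left m ⊗ₜ[k] (rr i).right m)))
      = ψ (Delta4 x) := by
  rw [Delta4, ← LinearMap.comp_apply]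
  rw [← sum3L (ψ ∘ₗ LinearMap.lTensor H (LinearMap.lTensor H Δ)) r rl]
  refine Finset.sum_congr rfl fun i _ => Finset.sum_congr rfl fun p _ => ?_
  rw [LinearMap.comp_apply, LinearMap.lTensor_tmul, LinearMap.lTensor_tmul,
    ← (rr i).eq, TensorProduct.tmul_sum, TensorProduct.tmul_sum, map_sum]

lemma sum4_mid {M : Type*} [AddCommMonoid M] [Module k M]
    (ψ : H ⊗[k] (H ⊗[k] (H ⊗[k] H)) →ₗ[k] M)
    {x : H} (r : Coalgebra.Repr k x (H × H)) (rr : ∀ i, Coalgebra.Repr k (r.right i) (H × H))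
    (rm : ∀ i j, Coalgebra.Repr k ((rr i).left j) (H × H)) :
    ∑ i ∈ r.index, ∑ j ∈ (rr i).index, ∑ t ∈ (rm i j).index,
      ψ (r.left i ⊗ₜ[k] ((rm i j).left t ⊗ₜ[k] ((rm i j).right t ⊗ₜ[k] (rr i).right j)))
      = ψ (Delta4 x) := by
  rw [Delta4_eq, ← LinearMap.comp_apply, ← sum_repr (ψ ∘ₗ LinearMap.lTensor H Delta3Map) r]
  refine Finset.sum_congr rfl fun i _ => ?_
  rw [LinearMap.comp_apply, LinearMap.lTensor_tmul, Delta3Map_apply]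
  have h := sum3L (ψ ∘ₗ TensorProduct.mk k H (H ⊗[k] (H ⊗[k] H)) (r.left i)) (rr i) (rm i)
  simp only [LinearMap.comp_apply, TensorProduct.mk_apply] at h
  exact h

lemma e1 {c : H} (rc : Coalgebra.Repr k c (H × H)) (B : H) :
    ∑ q ∈ rc.index, rc.left q * (σ (rc.right q) * B) = ε c • B := by
  have h : ∀ q, rc.left q * (σ (rc.right q) * B) =
      ((LinearMap.mulRight k B) ∘ₗ μ ∘ₗ LinearMap.lTensor H σ) (rc.left q ⊗ₜ[k] rc.right q) := by
    intro q
    simp [mul_assoc]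
  rw [Finset.sum_congr rfl fun q _ => h q, sum_repr]
  simp only [LinearMap.comp_apply, HopfAlgebra.mul_antipode_lTensor_comul_apply,
    LinearMap.mulRight_apply]
  rw [← Algebra.smul_def]

lemma s_one : σ (1 : H) = 1 := by
  have h := HopfAlgebra.mul_antipode_rTensor_comul_apply (R := k) (1 : H)
  rw [Bialgebra.comul_one, Algebra.TensorProduct.one_def] at h
  simpa using h

lemma K7 {a' b' : H} (r1 : Coalgebra.Repr k a' (H × H)) (r2 : Coalgebra.Repr k b' (H × H)) :
    ∑ p ∈ r1.index, ∑ q ∈ r2.index,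
      σ (r1.left p * r2.left q) * (r1.right p * r2.right q)
      = (ε a' * ε b') • (1 : H) := by
  have key : ∑ p ∈ r1.index, ∑ q ∈ r2.index,
      ((r1.left p * r2.left q) ⊗ₜ[k] (r1.right p * r2.right q)) = Δ (a' * b') := by
    rw [Bialgebra.comul_mul, ← r1.eq, ← r2.eq, Finset.sum_mul_sum]
    refine Finset.sum_congr rfl fun p _ => Finset.sum_congr rfl fun q _ => ?_
    rw [Algebra.TensorProduct.tmul_mul_tmul]
  have h := congrArg (μ ∘ₗ LinearMap.rTensor H σ) key
  rw [map_sum] at h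
  simp only [map_sum, LinearMap.comp_apply, LinearMap.rTensor_tmul, LinearMap.mul'_apply] at h
  rw [h, HopfAlgebra.mul_antipode_rTensor_comul_apply, Bialgebra.counit_mul,
    Algebra.algebraMap_eq_smul_one]

lemma sum_reorder4 {M : Type*} [AddCommMonoid M] {ia ib : Type*} {ka : ia → Type*}
    {kb : ib → Type*} (sa : Finset ia) (ta : ∀ i, Finset (ka i)) (sb : Finset ib)
    (tb : ∀ j, Finset (kb j)) (f : ∀ i, ka i → ∀ j, kb j → M) :
    ∑ i ∈ sa, ∑ p ∈ ta i, ∑ j ∈ sb, ∑ q ∈ tb j, f i p j q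
    = ∑ j ∈ sb, ∑ q ∈ tb j, ∑ i ∈ sa, ∑ p ∈ ta i, f i p j q :=
  calc ∑ i ∈ sa, ∑ p ∈ ta i, ∑ j ∈ sb, ∑ q ∈ tb j, f i p j q
      = ∑ i ∈ sa, ∑ j ∈ sb, ∑ p ∈ ta i, ∑ q ∈ tb j, f i p j q :=
        Finset.sum_congr rfl fun i _ => Finset.sum_comm
    _ = ∑ j ∈ sb, ∑ i ∈ sa, ∑ p ∈ ta i, ∑ q ∈ tb j, f i p j q := Finset.sum_comm
    _ = ∑ j ∈ sb, ∑ i ∈ sa, ∑ q ∈ tb j, ∑ p ∈ ta i, f i p j q :=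
        Finset.sum_congr rfl fun j _ => Finset.sum_congr rfl fun i _ => Finset.sum_comm
    _ = ∑ j ∈ sb, ∑ q ∈ tb j, ∑ i ∈ sa, ∑ p ∈ ta i, f i p j q :=
        Finset.sum_congr rfl fun j _ => Finset.sum_comm

noncomputable def psiA (a1 a2 a3 : H) : H ⊗[k] (H ⊗[k] H) →ₗ[k] H :=
  μ ∘ₗ LinearMap.lTensor H μ ∘ₗ
    TensorProduct.map (σ ∘ₗ LinearMap.mulLeft k a1)
      (TensorProduct.map (LinearMap.mulLeft k a2) (LinearMap.mulRight k (σ a3) ∘ₗ σ))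

lemma psiA_apply (a1 a2 a3 v1 v2 v3 : H) :
    psiA a1 a2 a3 (v1 ⊗ₜ[k] (v2 ⊗ₜ[k] v3)) = σ (a1 * v1) * (a2 * (v2 * (σ v3 * σ a3))) := by
  simp [psiA, mul_assoc]

noncomputable def psiB (b1 b2 b3 : H) : H ⊗[k] (H ⊗[k] H) →ₗ[k] H :=
  μ ∘ₗ LinearMap.lTensor H μ ∘ₗ
    TensorProduct.map (σ ∘ₗ LinearMap.mulRight k b1)
      (TensorProduct.map LinearMap.id
        (LinearMap.mulLeft k b2 ∘ₗ LinearMap.mulLeft k (σ b3) ∘ₗ σ))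

lemma psiB_apply (b1 b2 b3 u1 u2 u3 : H) :
    psiB b1 b2 b3 (u1 ⊗ₜ[k] (u2 ⊗ₜ[k] u3)) = σ (u1 * b1) * (u2 * (b2 * (σ b3 * σ u3))) := by
  simp [psiB, mul_assoc]

lemma antipode_mul (a b : H) : σ (a * b) = σ b * σ a := by
  classical
  let ra := ℛ k a
  let rb := ℛ k b
  let ra2 : ∀ i, Coalgebra.Repr k (ra.right i) (H × H) := fun i => ℛ k (ra.right i)
  let rb2 : ∀ j, Coalgebra.Repr k (rb.right j) (H × H) := fun j => ℛ k (rb.right j)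
  let la : ∀ i, Coalgebra.Repr k (ra.left i) (H × H) := fun i => ℛ k (ra.left i)
  let lb : ∀ j, Coalgebra.Repr k (rb.left j) (H × H) := fun j => ℛ k (rb.left j)
  set M : H := ∑ i ∈ ra.index, ∑ p ∈ (ra2 i).index, ∑ j ∈ rb.index, ∑ q ∈ (rb2 j).index,
      σ (ra.left i * rb.left j) *
        ((ra2 i).left p * ((rb2 j).left q * (σ ((rb2 j).right q) * σ ((ra2 i).right p))))
      with hM
  have claim1 : M = σ (a * b) := by
    have step1 : M = ∑ i ∈ ra.index, ∑ p ∈ (ra2 i).index, ∑ j ∈ rb.index,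
        ε (rb.right j) •
          (σ (ra.left i * rb.left j) * ((ra2 i).left p * σ ((ra2 i).right p))) := by
      rw [hM]
      refine Finset.sum_congr rfl fun i _ => Finset.sum_congr rfl fun p _ =>
        Finset.sum_congr rfl fun j _ => ?_
      rw [← Finset.mul_sum, ← Finset.mul_sum, e1 (rb2 j) (σ ((ra2 i).right p))]
      rw [mul_smul_comm, mul_smul_comm]
    have step2 : M = ∑ i ∈ ra.index, ∑ j ∈ rb.index,
        (ε (rb.right j) * ε (ra.right i)) •
          σ (ra.left i * rb.left j) := by
      rw [step1]
      refine Finset.sum_congr rfl fun i _ => ?_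
      rw [Finset.sum_comm]
      refine Finset.sum_congr rfl fun j _ => ?_
      rw [← Finset.smul_sum, ← Finset.mul_sum, HopfAlgebra.sum_mul_antipode_eq_smul (ra2 i)]
      rw [mul_smul_comm, smul_smul, mul_one]
    have expand : a * b = ∑ i ∈ ra.index, ∑ j ∈ rb.index,
        (ε (ra.right i) * ε (rb.right j)) •
          (ra.left i * rb.left j) := by
      conv_lhs => rw [← K2 ra, ← K2 rb]
      rw [Finset.sum_mul_sum]
      exact Finset.sum_congr rfl fun i _ => Finset.sum_congr rfl fun j _ => by
        rw [smul_mul_assoc, mul_smul_comm, smul_smul]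
    rw [step2, expand, map_sum]
    refine Finset.sum_congr rfl fun i _ => ?_
    rw [map_sum]
    exact Finset.sum_congr rfl fun j _ => by rw [map_smul, mul_comm]
  have claim2 : M = σ b * σ a := by
    -- transport the b-legs to the left-nested expansion
    have tb : M = ∑ i ∈ ra.index, ∑ p ∈ (ra2 i).index, ∑ j ∈ rb.index, ∑ q ∈ (lb j).index,
        σ (ra.left i * (lb j).left q) *
          ((ra2 i).left p * ((lb j).right q * (σ (rb.right j) * σ ((ra2 i).right p)))) := by
      rw [hM]
      refine Finset.sum_congr rfl fun i _ => Finset.sum_congr rfl fun p _ => ?_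
      have h1 : ∑ j ∈ rb.index, ∑ q ∈ (rb2 j).index,
          σ (ra.left i * rb.left j) *
            ((ra2 i).left p * ((rb2 j).left q * (σ ((rb2 j).right q) * σ ((ra2 i).right p))))
          = ∑ j ∈ rb.index, ∑ q ∈ (rb2 j).index,
            psiA (ra.left i) ((ra2 i).left p) ((ra2 i).right p)
              (rb.left j ⊗ₜ[k] ((rb2 j).left q ⊗ₜ[k] (rb2 j).right q)) :=
        Finset.sum_congr rfl fun j _ => Finset.sum_congr rfl fun q _ => by rw [psiA_apply]
      rw [h1, ← transportLR (psiA (ra.left i) ((ra2 i).left p) ((ra2 i).right p)) rb lb rb2]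
      exact Finset.sum_congr rfl fun j _ => Finset.sum_congr rfl fun q _ => by rw [psiA_apply]
    -- reorder the sums so that the pair (i, p) is innermost
    have reorder : M = ∑ j ∈ rb.index, ∑ q ∈ (lb j).index, ∑ i ∈ ra.index, ∑ p ∈ (ra2 i).index,
        σ (ra.left i * (lb j).left q) *
          ((ra2 i).left p * ((lb j).right q * (σ (rb.right j) * σ ((ra2 i).right p)))) := by
      rw [tb]
      exact sum_reorder4 ra.index (fun i => (ra2 i).index) rb.index (fun j => (lb j).index) _
    -- transport the a-legs
    have ta : M = ∑ j ∈ rb.index, ∑ q ∈ (lb j).index, ∑ i ∈ ra.index, ∑ p ∈ (la i).index,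
        σ ((la i).left p * (lb j).left q) *
          ((la i).right p * ((lb j).right q * (σ (rb.right j) * σ (ra.right i)))) := by
      rw [reorder]
      refine Finset.sum_congr rfl fun j _ => Finset.sum_congr rfl fun q _ => ?_
      have h1 : ∑ i ∈ ra.index, ∑ p ∈ (ra2 i).index,
          σ (ra.left i * (lb j).left q) *
            ((ra2 i).left p * ((lb j).right q * (σ (rb.right j) * σ ((ra2 i).right p))))
          = ∑ i ∈ ra.index, ∑ p ∈ (ra2 i).index,
            psiB ((lb j).left q) ((lb j).right q) (rb.right j)
              (ra.left i ⊗ₜ[k] ((ra2 i).left p ⊗ₜ[k] (ra2 i).right p)) :=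
        Finset.sum_congr rfl fun i _ => Finset.sum_congr rfl fun p _ => by rw [psiB_apply]
      rw [h1, ← transportLR (psiB ((lb j).left q) ((lb j).right q) (rb.right j)) ra la ra2]
      exact Finset.sum_congr rfl fun i _ => Finset.sum_congr rfl fun p _ => by rw [psiB_apply]
    -- now collapse using K7
    have step3 : M = ∑ j ∈ rb.index, ∑ i ∈ ra.index,
        (ε (ra.left i) * ε (rb.left j)) •
          (σ (rb.right j) * σ (ra.right i)) := by
      rw [ta]
      refine Finset.sum_congr rfl fun j _ => ?_
      rw [Finset.sum_comm]
      refine Finset.sum_congr rfl fun i _ => ?_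
      rw [Finset.sum_comm]
      rw [show ∑ p ∈ (la i).index, ∑ q ∈ (lb j).index,
          σ ((la i).left p * (lb j).left q) *
            ((la i).right p * ((lb j).right q * (σ (rb.right j) * σ (ra.right i))))
          = (∑ p ∈ (la i).index, ∑ q ∈ (lb j).index,
              σ ((la i).left p * (lb j).left q) * ((la i).right p * (lb j).right q))
            * (σ (rb.right j) * σ (ra.right i)) from by
        rw [Finset.sum_mul]
        refine Finset.sum_congr rfl fun p _ => ?_
        rw [Finset.sum_mul]
        exact Finset.sum_congr rfl fun q _ => by rw [mul_assoc, mul_assoc]]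
      rw [K7 (la i) (lb j), smul_mul_assoc, one_mul]
    rw [step3]
    have hb : σ b = ∑ j ∈ rb.index, ε (rb.left j) • σ (rb.right j) := by
      conv_lhs => rw [← K1 rb]
      rw [map_sum]
      exact Finset.sum_congr rfl fun j _ => by rw [map_smul]
    have ha : σ a = ∑ i ∈ ra.index, ε (ra.left i) • σ (ra.right i) := by
      conv_lhs => rw [← K1 ra]
      rw [map_sum]
      exact Finset.sum_congr rfl fun i _ => by rw [map_smul]
    rw [ha, hb, Finset.sum_mul_sum]
    exact Finset.sum_congr rfl fun j _ => Finset.sum_congr rfl fun i _ => by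
      rw [smul_mul_assoc, mul_smul_comm, smul_smul, mul_comm]
  rw [← claim1, claim2]

noncomputable def tau12 : H ⊗[k] H →ₗ[k] H ⊗[k] H := (TensorProduct.comm k H H).toLinearMap

@[simp] lemma tau12_tmul (x y : H) : tau12 (x ⊗ₜ[k] y) = y ⊗ₜ[k] x := rfl

lemma L_f_mu {c : H} (rc : Coalgebra.Repr k c (H × H)) :
    ∑ p ∈ rc.index, (Δ (σ (rc.left p))) * (Δ (rc.right p)) = ε c • (1 : H ⊗[k] H) := by
  have h1 : ∀ p, (Δ (σ (rc.left p))) * (Δ (rc.right p)) = Δ (σ (rc.left p) * rc.right p) :=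
    fun p => (Bialgebra.comul_mul _ _).symm
  rw [Finset.sum_congr rfl fun p _ => h1 p, ← map_sum, HopfAlgebra.sum_antipode_mul_eq_algebraMap_counit rc,
    Bialgebra.comul_algebraMap, Algebra.algebraMap_eq_smul_one]

noncomputable def psi0 : H ⊗[k] (H ⊗[k] (H ⊗[k] H)) →ₗ[k] H ⊗[k] H :=
  (LinearMap.mul' k (H ⊗[k] H)) ∘ₗ
    TensorProduct.map LinearMap.id
      ((TensorProduct.comm k H H).toLinearMap ∘ₗ TensorProduct.map σ σ) ∘ₗ
    (TensorProduct.assoc k H H (H ⊗[k] H)).symm.toLinearMap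

lemma psi0_apply (c1 c2 c3 c4 : H) :
    psi0 (c1 ⊗ₜ[k] (c2 ⊗ₜ[k] (c3 ⊗ₜ[k] c4))) = (c1 * σ c4) ⊗ₜ[k] (c2 * σ c3) := by
  simp [psi0, Algebra.TensorProduct.tmul_mul_tmul]

lemma L_mu_g {c : H} (rc : Coalgebra.Repr k c (H × H)) :
    ∑ j ∈ rc.index, (Δ (rc.left j)) * (tau12 (TensorProduct.map σ σ (Δ (rc.right j))))
      = ε c • (1 : H ⊗[k] H) := by
  classical
  let rl : ∀ j, Coalgebra.Repr k (rc.left j) (H × H) := fun j => ℛ k (rc.left j)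
  let rr : ∀ j, Coalgebra.Repr k (rc.right j) (H × H) := fun j => ℛ k (rc.right j)
  have expand : ∀ j, (Δ (rc.left j)) * (tau12 (TensorProduct.map σ σ (Δ (rc.right j))))
      = ∑ t ∈ (rl j).index, ∑ m ∈ (rr j).index,
        psi0 ((rl j).left t ⊗ₜ[k] ((rl j).right t ⊗ₜ[k] ((rr j).left m ⊗ₜ[k] (rr j).right m))) := by
    intro j
    rw [← (rl j).eq, ← (rr j).eq, map_sum, map_sum, Finset.sum_mul_sum]
    refine Finset.sum_congr rfl fun t _ => Finset.sum_congr rfl fun m _ => ?_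
    rw [psi0_apply]
    simp [Algebra.TensorProduct.tmul_mul_tmul]
  rw [Finset.sum_congr rfl fun j _ => expand j, sum4_22 psi0 rc rl rr]
  -- now evaluate psi0 (Delta4 c) via the middle expansion
  let rm : ∀ i j, Coalgebra.Repr k ((rr i).left j) (H × H) := fun i j => ℛ k ((rr i).left j)
  rw [← sum4_mid psi0 rc rr rm]
  have step1 : ∀ i j, ∑ t ∈ (rm i j).index,
      psi0 (rc.left i ⊗ₜ[k] ((rm i j).left t ⊗ₜ[k] ((rm i j).right t ⊗ₜ[k] (rr i).right j)))
      = ε ((rr i).left j) • ((rc.left i * σ ((rr i).right j)) ⊗ₜ[k] (1 : H)) := by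
    intro i j
    rw [Finset.sum_congr rfl fun t _ => psi0_apply _ _ _ _, ← TensorProduct.tmul_sum,
      HopfAlgebra.sum_mul_antipode_eq_smul (rm i j), TensorProduct.tmul_smul]
  rw [Finset.sum_congr rfl fun i _ => Finset.sum_congr rfl fun j _ => step1 i j]
  have step2 : ∀ i, ∑ j ∈ (rr i).index,
      ε ((rr i).left j) • ((rc.left i * σ ((rr i).right j)) ⊗ₜ[k] (1 : H))
      = (rc.left i * σ (rc.right i)) ⊗ₜ[k] (1 : H) := by
    intro i
    have : ∀ j, ε ((rr i).left j) • ((rc.left i * σ ((rr i).right j)) ⊗ₜ[k] (1 : H))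
        = (rc.left i * (ε ((rr i).left j) • σ ((rr i).right j))) ⊗ₜ[k] (1 : H) := by
      intro j
      rw [mul_smul_comm, TensorProduct.smul_tmul']
    rw [Finset.sum_congr rfl fun j _ => this j, ← TensorProduct.sum_tmul, ← Finset.mul_sum]
    have hs : ∑ j ∈ (rr i).index, ε ((rr i).left j) • σ ((rr i).right j)
        = σ (rc.right i) := by
      have h := congrArg σ (K1 (rr i))
      rw [map_sum] at h
      simp only [map_smul] at h
      exact h
    rw [hs]
  rw [Finset.sum_congr rfl fun i _ => step2 i, ← TensorProduct.sum_tmul,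
    HopfAlgebra.sum_mul_antipode_eq_smul rc, Algebra.TensorProduct.one_def,
    TensorProduct.smul_tmul']

noncomputable def psiC : H ⊗[k] (H ⊗[k] H) →ₗ[k] H ⊗[k] H :=
  (LinearMap.mul' k (H ⊗[k] H)) ∘ₗ
    TensorProduct.map (Coalgebra.comul ∘ₗ σ)
      ((LinearMap.mul' k (H ⊗[k] H)) ∘ₗ
        TensorProduct.map Coalgebra.comul
          ((TensorProduct.comm k H H).toLinearMap ∘ₗ TensorProduct.map σ σ ∘ₗ Coalgebra.comul))

lemma psiC_apply (v1 v2 v3 : H) :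
    psiC (v1 ⊗ₜ[k] (v2 ⊗ₜ[k] v3))
      = (Δ (σ v1)) * ((Δ v2) * (tau12 (TensorProduct.map σ σ (Δ v3)))) := by
  simp [psiC, tau12]

lemma antipode_comul (c : H) :
    Δ (σ c) = tau12 (TensorProduct.map σ σ (Δ c)) := by
  classical
  let rc := ℛ k c
  let rc2 : ∀ i, Coalgebra.Repr k (rc.right i) (H × H) := fun i => ℛ k (rc.right i)
  let lc : ∀ i, Coalgebra.Repr k (rc.left i) (H × H) := fun i => ℛ k (rc.left i)
  set M : H ⊗[k] H := ∑ i ∈ rc.index, ∑ j ∈ (rc2 i).index,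
      psiC (rc.left i ⊗ₜ[k] ((rc2 i).left j ⊗ₜ[k] (rc2 i).right j)) with hM
  have claim1 : M = Δ (σ c) := by
    rw [hM]
    have inner : ∀ i, ∑ j ∈ (rc2 i).index,
        psiC (rc.left i ⊗ₜ[k] ((rc2 i).left j ⊗ₜ[k] (rc2 i).right j))
        = ε (rc.right i) • Δ (σ (rc.left i)) := by
      intro i
      rw [Finset.sum_congr rfl fun j _ => psiC_apply _ _ _, ← Finset.mul_sum,
        L_mu_g (rc2 i), mul_smul_comm, mul_one]
    rw [Finset.sum_congr rfl fun i _ => inner i]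
    have : ∀ i, ε (rc.right i) • Δ (σ (rc.left i))
        = (Coalgebra.comul ∘ₗ σ) (ε (rc.right i) • rc.left i) := by
      intro i; rw [map_smul]; rfl
    rw [Finset.sum_congr rfl fun i _ => this i, ← map_sum, K2 rc]
    rfl
  have claim2 : M = tau12 (TensorProduct.map σ σ (Δ c)) := by
    rw [hM, ← transportLR psiC rc lc rc2]
    have inner : ∀ i, ∑ p ∈ (lc i).index,
        psiC ((lc i).left p ⊗ₜ[k] ((lc i).right p ⊗ₜ[k] rc.right i))
        = ε (rc.left i) • (tau12 (TensorProduct.map σ σ (Δ (rc.right i)))) := by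
      intro i
      have h1 : ∀ p, psiC ((lc i).left p ⊗ₜ[k] ((lc i).right p ⊗ₜ[k] rc.right i))
          = ((Δ (σ ((lc i).left p))) * (Δ ((lc i).right p)))
            * (tau12 (TensorProduct.map σ σ (Δ (rc.right i)))) := by
        intro p; rw [psiC_apply, mul_assoc]
      rw [Finset.sum_congr rfl fun p _ => h1 p, ← Finset.sum_mul, L_f_mu (lc i),
        smul_mul_assoc, one_mul]
    rw [Finset.sum_congr rfl fun i _ => inner i]
    have : ∀ i, ε (rc.left i) • (tau12 (TensorProduct.map σ σ (Δ (rc.right i))))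
        = (tau12 ∘ₗ TensorProduct.map σ σ ∘ₗ Coalgebra.comul) (ε (rc.left i) • rc.right i) := by
      intro i; rw [map_smul]; rfl
    rw [Finset.sum_congr rfl fun i _ => this i, ← map_sum, K1 rc]
    rfl
  rw [← claim1, claim2]



section Sprime
variable (s' : H →ₗ[k] H)

lemma hS1' (hs1 : σ ∘ₗ s' = LinearMap.id) (x : H) : σ (s' x) = x :=
  LinearMap.congr_fun hs1 x

lemma hS2' (hs2 : s' ∘ₗ σ = LinearMap.id) (x : H) : s' (σ x) = x :=
  LinearMap.congr_fun hs2 x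

lemma sp_one (hs2 : s' ∘ₗ σ = LinearMap.id) : s' (1 : H) = 1 := by
  have h := hS2' s' hs2 (1 : H)
  rwa [s_one] at h

lemma sp_mul (hs1 : σ ∘ₗ s' = LinearMap.id) (hs2 : s' ∘ₗ σ = LinearMap.id) (a b : H) :
    s' (a * b) = s' b * s' a := by
  have h : a * b = σ (s' b * s' a) := by
    rw [_root_.antipode_mul, hS1' s' hs1, hS1' s' hs1]
  rw [h, hS2' s' hs2]

lemma tau12_tau12 (u : H ⊗[k] H) : tau12 (tau12 u) = u := by
  induction u using TensorProduct.induction_on with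
  | zero => simp
  | tmul x y => simp
  | add u v hu hv => rw [map_add, map_add, hu, hv]

lemma map_sp_map_s (hs2 : s' ∘ₗ σ = LinearMap.id) (u : H ⊗[k] H) :
    TensorProduct.map s' s' (TensorProduct.map σ σ u) = u := by
  have h : TensorProduct.map s' s' ∘ₗ TensorProduct.map σ σ
      = (LinearMap.id : H ⊗[k] H →ₗ[k] H ⊗[k] H) := by
    rw [← TensorProduct.map_comp, hs2, TensorProduct.map_id]
  exact LinearMap.congr_fun h u

lemma sp_comul (hs1 : σ ∘ₗ s' = LinearMap.id) (hs2 : s' ∘ₗ σ = LinearMap.id) (c : H) :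
    Δ (s' c) = TensorProduct.map s' s' (tau12 (Δ c)) := by
  have h := antipode_comul (k := k) (s' c)
  rw [hS1' s' hs1 c] at h
  calc Δ (s' c) = TensorProduct.map s' s' (TensorProduct.map σ σ (Δ (s' c))) :=
        (map_sp_map_s s' hs2 _).symm
    _ = TensorProduct.map s' s' (tau12 (tau12 (TensorProduct.map σ σ (Δ (s' c))))) := by
        rw [tau12_tau12]
    _ = TensorProduct.map s' s' (tau12 (Δ c)) := by rw [← h]

lemma K5 (hs1 : σ ∘ₗ s' = LinearMap.id) (hs2 : s' ∘ₗ σ = LinearMap.id)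
    {x : H} (r : Coalgebra.Repr k x (H × H)) :
    ∑ i ∈ r.index, s' (r.right i) * r.left i = ε x • (1 : H) := by
  have h1 : σ (∑ i ∈ r.index, s' (r.right i) * r.left i) = algebraMap k H (ε x) := by
    rw [map_sum]
    have e : ∑ i ∈ r.index, σ (s' (r.right i) * r.left i)
        = ∑ i ∈ r.index, σ (r.left i) * r.right i :=
      Finset.sum_congr rfl fun i _ => by rw [_root_.antipode_mul, hS1' s' hs1]
    rw [e]
    exact HopfAlgebra.sum_antipode_mul_eq_algebraMap_counit r
  have h2 := congrArg s' h1
  rw [hS2' s' hs2] at h2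
  rw [h2, Algebra.algebraMap_eq_smul_one, map_smul, sp_one s' hs2]


lemma ext3 {M : Type*} [AddCommMonoid M] [Module k M] {f g : H ⊗[k] (H ⊗[k] H) →ₗ[k] M}
    (h : ∀ x y z : H, f (x ⊗ₜ[k] (y ⊗ₜ[k] z)) = g (x ⊗ₜ[k] (y ⊗ₜ[k] z))) : f = g := by
  apply TensorProduct.ext'
  intro x u
  induction u using TensorProduct.induction_on with
  | zero => rw [TensorProduct.tmul_zero, map_zero, map_zero]
  | tmul y z => exact h x y z
  | add u v hu hv => rw [TensorProduct.tmul_add, map_add, map_add, hu, hv]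

lemma Tmap_tmul (x y : H) (r : Coalgebra.Repr k x (H × H)) :
    Tmap k H (x ⊗ₜ[k] y) = ∑ i ∈ r.index, r.left i ⊗ₜ[k] (r.right i * y) := by
  rw [Tmap, LinearMap.comp_apply, LinearMap.comp_apply, LinearMap.rTensor_tmul, ← r.eq,
    TensorProduct.sum_tmul, map_sum, map_sum]
  exact Finset.sum_congr rfl fun i _ => by simp

lemma Smap_tmul (x y : H) (r : Coalgebra.Repr k x (H × H)) :
    Smap k H s' (x ⊗ₜ[k] y) = ∑ i ∈ r.index, r.left i ⊗ₜ[k] (y * s' (r.right i)) := by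
  rw [Smap, LinearMap.comp_apply, LinearMap.comp_apply, LinearMap.rTensor_tmul, ← r.eq,
    TensorProduct.sum_tmul, map_sum, map_sum]
  exact Finset.sum_congr rfl fun i _ => by simp

lemma op12_tmul (F : H ⊗[k] H →ₗ[k] H ⊗[k] H) (x y z : H) :
    op12 k H F (x ⊗ₜ[k] (y ⊗ₜ[k] z))
      = (TensorProduct.assoc k H H H) (F (x ⊗ₜ[k] y) ⊗ₜ[k] z) := by
  simp [op12]

lemma op23_tmul (F : H ⊗[k] H →ₗ[k] H ⊗[k] H) (x y z : H) :
    op23 k H F (x ⊗ₜ[k] (y ⊗ₜ[k] z)) = x ⊗ₜ[k] F (y ⊗ₜ[k] z) := by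
  simp [op23]

lemma op13_tmul (F : H ⊗[k] H →ₗ[k] H ⊗[k] H) (x y z : H) :
    op13 k H F (x ⊗ₜ[k] (y ⊗ₜ[k] z))
      = sw23 k H ((TensorProduct.assoc k H H H) (F (x ⊗ₜ[k] z) ⊗ₜ[k] y)) := by
  simp [op13, op12, sw23]

lemma op12_Tmap (x y z : H) (r : Coalgebra.Repr k x (H × H)) :
    op12 k H (Tmap k H) (x ⊗ₜ[k] (y ⊗ₜ[k] z))
      = ∑ i ∈ r.index, r.left i ⊗ₜ[k] ((r.right i * y) ⊗ₜ[k] z) := by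
  rw [op12_tmul, Tmap_tmul x y r, TensorProduct.sum_tmul, map_sum]
  exact Finset.sum_congr rfl fun i _ => by simp

lemma op12_Smap (x y z : H) (r : Coalgebra.Repr k x (H × H)) :
    op12 k H (Smap k H s') (x ⊗ₜ[k] (y ⊗ₜ[k] z))
      = ∑ i ∈ r.index, r.left i ⊗ₜ[k] ((y * s' (r.right i)) ⊗ₜ[k] z) := by
  rw [op12_tmul, Smap_tmul s' x y r, TensorProduct.sum_tmul, map_sum]
  exact Finset.sum_congr rfl fun i _ => by simp

lemma op23_Tmap (x y z : H) (r : Coalgebra.Repr k y (H × H)) :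
    op23 k H (Tmap k H) (x ⊗ₜ[k] (y ⊗ₜ[k] z))
      = ∑ j ∈ r.index, x ⊗ₜ[k] (r.left j ⊗ₜ[k] (r.right j * z)) := by
  rw [op23_tmul, Tmap_tmul y z r, TensorProduct.tmul_sum]

lemma op23_Smap (x y z : H) (r : Coalgebra.Repr k y (H × H)) :
    op23 k H (Smap k H s') (x ⊗ₜ[k] (y ⊗ₜ[k] z))
      = ∑ j ∈ r.index, x ⊗ₜ[k] (r.left j ⊗ₜ[k] (z * s' (r.right j))) := by
  rw [op23_tmul, Smap_tmul s' y z r, TensorProduct.tmul_sum]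

lemma op13_Tmap (x y z : H) (r : Coalgebra.Repr k x (H × H)) :
    op13 k H (Tmap k H) (x ⊗ₜ[k] (y ⊗ₜ[k] z))
      = ∑ i ∈ r.index, r.left i ⊗ₜ[k] (y ⊗ₜ[k] (r.right i * z)) := by
  rw [op13_tmul, Tmap_tmul x z r, TensorProduct.sum_tmul, map_sum, map_sum]
  exact Finset.sum_congr rfl fun i _ => by simp [sw23]

lemma op13_Smap (x y z : H) (r : Coalgebra.Repr k x (H × H)) :
    op13 k H (Smap k H s') (x ⊗ₜ[k] (y ⊗ₜ[k] z))
      = ∑ i ∈ r.index, r.left i ⊗ₜ[k] (y ⊗ₜ[k] (z * s' (r.right i))) := by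
  rw [op13_tmul, Smap_tmul s' x z r, TensorProduct.sum_tmul, map_sum, map_sum]
  exact Finset.sum_congr rfl fun i _ => by simp [sw23]

lemma part1 : op13 k H (Tmap k H) ∘ₗ op23 k H (Smap k H s')
    = op23 k H (Smap k H s') ∘ₗ op13 k H (Tmap k H) := by
  apply ext3
  intro x y z
  rw [LinearMap.comp_apply, LinearMap.comp_apply]
  rw [op23_Smap s' x y z (ℛ k y), map_sum, op13_Tmap x y z (ℛ k x), map_sum]
  rw [Finset.sum_congr rfl fun j _ => op13_Tmap x _ _ (ℛ k x)]
  rw [Finset.sum_congr rfl fun i _ => op23_Smap s' _ y _ (ℛ k y)]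
  rw [Finset.sum_comm]
  exact Finset.sum_congr rfl fun i _ => Finset.sum_congr rfl fun j _ => by rw [mul_assoc]


lemma part3 (hs1 : σ ∘ₗ s' = LinearMap.id) (hs2 : s' ∘ₗ σ = LinearMap.id) :
    op12 k H (Tmap k H) ∘ₗ op13 k H (Smap k H s') ∘ₗ op23 k H (Smap k H s')
      = op23 k H (Smap k H s') ∘ₗ op12 k H (Tmap k H) := by
  apply ext3
  intro x y z
  simp only [LinearMap.comp_apply]
  classical
  let rx := ℛ k x
  let ry := ℛ k y
  let lx : ∀ i, Coalgebra.Repr k (rx.left i) (H × H) := fun i => ℛ k (rx.left i)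
  let rho : ∀ i, Coalgebra.Repr k (rx.right i) (H × H) := fun i => ℛ k (rx.right i)
  have L1 : op12 k H (Tmap k H) (op13 k H (Smap k H s') (op23 k H (Smap k H s')
        (x ⊗ₜ[k] (y ⊗ₜ[k] z))))
      = ∑ j ∈ ry.index, ∑ i ∈ rx.index, ∑ p ∈ (lx i).index,
        (lx i).left p ⊗ₜ[k] (((lx i).right p * ry.left j) ⊗ₜ[k]
          ((z * s' (ry.right j)) * s' (rx.right i))) := by
    rw [op23_Smap s' x y z ry, map_sum, map_sum]
    refine Finset.sum_congr rfl fun j _ => ?_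
    rw [op13_Smap s' x (ry.left j) _ rx, map_sum]
    exact Finset.sum_congr rfl fun i _ => op12_Tmap (rx.left i) _ _ (lx i)
  have L2 : op12 k H (Tmap k H) (op13 k H (Smap k H s') (op23 k H (Smap k H s')
        (x ⊗ₜ[k] (y ⊗ₜ[k] z))))
      = ∑ j ∈ ry.index, ∑ i ∈ rx.index, ∑ m ∈ (rho i).index,
        rx.left i ⊗ₜ[k] (((rho i).left m * ry.left j) ⊗ₜ[k]
          ((z * s' (ry.right j)) * s' ((rho i).right m))) := by
    rw [L1]
    refine Finset.sum_congr rfl fun j _ => ?_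
    have hpsi := transportLR (TensorProduct.map LinearMap.id
      (TensorProduct.map (LinearMap.mulRight k (ry.left j))
        (LinearMap.mulLeft k (z * s' (ry.right j)) ∘ₗ s'))) rx lx rho
    simp only [TensorProduct.map_tmul, LinearMap.id_coe, id_eq, LinearMap.mulRight_apply,
      LinearMap.comp_apply, LinearMap.mulLeft_apply] at hpsi
    exact hpsi
  have R2 : ∀ i, op23 k H (Smap k H s') (rx.left i ⊗ₜ[k] ((rx.right i * y) ⊗ₜ[k] z))
      = ∑ m ∈ (rho i).index, ∑ j ∈ ry.index,
        rx.left i ⊗ₜ[k] (((rho i).left m * ry.left j) ⊗ₜ[k]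
          (z * (s' (ry.right j) * s' ((rho i).right m)))) := by
    intro i
    set W := ℛ k (rx.right i * y) with hW
    set phi : H ⊗[k] H →ₗ[k] H ⊗[k] (H ⊗[k] H) :=
      (TensorProduct.mk k H (H ⊗[k] H) (rx.left i)) ∘ₗ
        TensorProduct.map LinearMap.id (LinearMap.mulLeft k z ∘ₗ s') with hphi
    have e : ∀ q, rx.left i ⊗ₜ[k] (W.left q ⊗ₜ[k] (z * s' (W.right q)))
        = phi (W.left q ⊗ₜ[k] W.right q) := by
      intro q
      simp [hphi]
    rw [op23_Smap s' (rx.left i) _ z W, Finset.sum_congr rfl fun q _ => e q, sum_repr phi W,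
      Bialgebra.comul_mul, ← (rho i).eq, ← ry.eq, Finset.sum_mul_sum, map_sum]
    refine Finset.sum_congr rfl fun m _ => ?_
    rw [map_sum]
    refine Finset.sum_congr rfl fun j _ => ?_
    rw [Algebra.TensorProduct.tmul_mul_tmul, hphi]
    simp only [LinearMap.comp_apply, TensorProduct.map_tmul, LinearMap.id_coe, id_eq,
      LinearMap.mulLeft_apply, TensorProduct.mk_apply]
    rw [sp_mul s' hs1 hs2]
  have R1 : op23 k H (Smap k H s') (op12 k H (Tmap k H) (x ⊗ₜ[k] (y ⊗ₜ[k] z)))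
      = ∑ i ∈ rx.index, ∑ m ∈ (rho i).index, ∑ j ∈ ry.index,
        rx.left i ⊗ₜ[k] (((rho i).left m * ry.left j) ⊗ₜ[k]
          (z * (s' (ry.right j) * s' ((rho i).right m)))) := by
    rw [op12_Tmap x y z rx, map_sum]
    exact Finset.sum_congr rfl fun i _ => R2 i
  rw [L2, R1]
  have reorder : ∑ i ∈ rx.index, ∑ m ∈ (rho i).index, ∑ j ∈ ry.index,
        rx.left i ⊗ₜ[k] (((rho i).left m * ry.left j) ⊗ₜ[k]
          (z * (s' (ry.right j) * s' ((rho i).right m))))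
      = ∑ j ∈ ry.index, ∑ i ∈ rx.index, ∑ m ∈ (rho i).index,
        rx.left i ⊗ₜ[k] (((rho i).left m * ry.left j) ⊗ₜ[k]
          (z * (s' (ry.right j) * s' ((rho i).right m)))) :=
    calc ∑ i ∈ rx.index, ∑ m ∈ (rho i).index, ∑ j ∈ ry.index,
          rx.left i ⊗ₜ[k] (((rho i).left m * ry.left j) ⊗ₜ[k]
            (z * (s' (ry.right j) * s' ((rho i).right m))))
        = ∑ i ∈ rx.index, ∑ j ∈ ry.index, ∑ m ∈ (rho i).index,
          rx.left i ⊗ₜ[k] (((rho i).left m * ry.left j) ⊗ₜ[k]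
            (z * (s' (ry.right j) * s' ((rho i).right m)))) :=
          Finset.sum_congr rfl fun i _ => Finset.sum_comm
      _ = ∑ j ∈ ry.index, ∑ i ∈ rx.index, ∑ m ∈ (rho i).index,
          rx.left i ⊗ₜ[k] (((rho i).left m * ry.left j) ⊗ₜ[k]
            (z * (s' (ry.right j) * s' ((rho i).right m)))) := Finset.sum_comm
  rw [reorder]
  refine Finset.sum_congr rfl fun j _ => Finset.sum_congr rfl fun i _ =>
    Finset.sum_congr rfl fun m _ => ?_
  rw [mul_assoc]

noncomputable def gmap : H ⊗[k] (H ⊗[k] H) →ₗ[k] H ⊗[k] H :=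
  LinearMap.lTensor H (μ ∘ₗ tau12) ∘ₗ (TensorProduct.comm k (H ⊗[k] H) H).toLinearMap ∘ₗ
    (TensorProduct.assoc k H H H).symm.toLinearMap

lemma gmap_apply (u2 u3 u4 : H) :
    gmap (u2 ⊗ₜ[k] (u3 ⊗ₜ[k] u4)) = u4 ⊗ₜ[k] (u3 * u2) := by
  simp [gmap]

noncomputable def psiE (c d z : H) : H ⊗[k] (H ⊗[k] (H ⊗[k] H)) →ₗ[k] H ⊗[k] (H ⊗[k] H) :=
  LinearMap.lTensor H gmap ∘ₗ
    TensorProduct.map LinearMap.id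
      (TensorProduct.map (LinearMap.mulRight k z)
        (TensorProduct.map (LinearMap.mulLeft k d ∘ₗ s') (LinearMap.mulLeft k c ∘ₗ s')))

lemma psiE_apply (c d z x1 x2 x3 x4 : H) :
    psiE s' c d z (x1 ⊗ₜ[k] (x2 ⊗ₜ[k] (x3 ⊗ₜ[k] x4)))
      = x1 ⊗ₜ[k] ((c * s' x4) ⊗ₜ[k] ((d * s' x3) * (x2 * z))) := by
  simp [psiE, gmap]

lemma part2 (hs1 : σ ∘ₗ s' = LinearMap.id) (hs2 : s' ∘ₗ σ = LinearMap.id) :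
    op23 k H (Tmap k H) ∘ₗ op13 k H (Tmap k H) ∘ₗ op12 k H (Smap k H s')
      = op12 k H (Smap k H s') ∘ₗ op23 k H (Tmap k H) := by
  apply ext3
  intro x y z
  simp only [LinearMap.comp_apply]
  classical
  let rx := ℛ k x
  let ry := ℛ k y
  let lx : ∀ i, Coalgebra.Repr k (rx.left i) (H × H) := fun i => ℛ k (rx.left i)
  let rho : ∀ i, Coalgebra.Repr k (rx.right i) (H × H) := fun i => ℛ k (rx.right i)
  let rm : ∀ i j, Coalgebra.Repr k ((rho i).left j) (H × H) := fun i j => ℛ k ((rho i).left j)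
  have A1 : op23 k H (Tmap k H) (op13 k H (Tmap k H) (op12 k H (Smap k H s')
        (x ⊗ₜ[k] (y ⊗ₜ[k] z))))
      = ∑ i ∈ rx.index, ∑ p ∈ (lx i).index, ∑ q ∈ (ℛ k (y * s' (rx.right i))).index,
        (lx i).left p ⊗ₜ[k] ((ℛ k (y * s' (rx.right i))).left q ⊗ₜ[k]
          ((ℛ k (y * s' (rx.right i))).right q * ((lx i).right p * z))) := by
    rw [op12_Smap s' x y z rx, map_sum, map_sum]
    refine Finset.sum_congr rfl fun i _ => ?_
    rw [op13_Tmap (rx.left i) _ z (lx i), map_sum]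
    exact Finset.sum_congr rfl fun p _ =>
      op23_Tmap ((lx i).left p) _ _ (ℛ k (y * s' (rx.right i)))
  have A2 : ∀ i p, ∑ q ∈ (ℛ k (y * s' (rx.right i))).index,
        (lx i).left p ⊗ₜ[k] ((ℛ k (y * s' (rx.right i))).left q ⊗ₜ[k]
          ((ℛ k (y * s' (rx.right i))).right q * ((lx i).right p * z)))
      = ∑ j ∈ ry.index, ∑ m ∈ (rho i).index,
        psiE s' (ry.left j) (ry.right j) z
          ((lx i).left p ⊗ₜ[k] ((lx i).right p ⊗ₜ[k] ((rho i).left m ⊗ₜ[k] (rho i).right m))) := by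
    intro i p
    set W := ℛ k (y * s' (rx.right i)) with hW
    set phi : H ⊗[k] H →ₗ[k] H ⊗[k] (H ⊗[k] H) :=
      (TensorProduct.mk k H (H ⊗[k] H) ((lx i).left p)) ∘ₗ
        TensorProduct.map LinearMap.id (LinearMap.mulRight k ((lx i).right p * z)) with hphi
    have e : ∀ q, (lx i).left p ⊗ₜ[k] (W.left q ⊗ₜ[k] (W.right q * ((lx i).right p * z)))
        = phi (W.left q ⊗ₜ[k] W.right q) := by
      intro q
      simp [hphi, mul_assoc]
    rw [Finset.sum_congr rfl fun q _ => e q, sum_repr phi W, Bialgebra.comul_mul,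
      sp_comul s' hs1 hs2, ← ry.eq, ← (rho i).eq, map_sum, map_sum, Finset.sum_mul_sum, map_sum]
    refine Finset.sum_congr rfl fun j _ => ?_
    rw [map_sum]
    refine Finset.sum_congr rfl fun m _ => ?_
    rw [tau12_tmul, TensorProduct.map_tmul, Algebra.TensorProduct.tmul_mul_tmul, hphi,
      psiE_apply]
    simp only [LinearMap.comp_apply, TensorProduct.map_tmul, LinearMap.id_coe, id_eq,
      LinearMap.mulRight_apply, TensorProduct.mk_apply]
  have A3 : op23 k H (Tmap k H) (op13 k H (Tmap k H) (op12 k H (Smap k H s')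
        (x ⊗ₜ[k] (y ⊗ₜ[k] z))))
      = ∑ j ∈ ry.index, ∑ i ∈ rx.index, ∑ p ∈ (lx i).index, ∑ m ∈ (rho i).index,
        psiE s' (ry.left j) (ry.right j) z
          ((lx i).left p ⊗ₜ[k] ((lx i).right p ⊗ₜ[k] ((rho i).left m ⊗ₜ[k] (rho i).right m))) := by
    rw [A1, Finset.sum_congr rfl fun i _ => Finset.sum_congr rfl fun p _ => A2 i p]
    calc ∑ i ∈ rx.index, ∑ p ∈ (lx i).index, ∑ j ∈ ry.index, ∑ m ∈ (rho i).index,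
          psiE s' (ry.left j) (ry.right j) z
            ((lx i).left p ⊗ₜ[k] ((lx i).right p ⊗ₜ[k] ((rho i).left m ⊗ₜ[k] (rho i).right m)))
        = ∑ i ∈ rx.index, ∑ j ∈ ry.index, ∑ p ∈ (lx i).index, ∑ m ∈ (rho i).index,
          psiE s' (ry.left j) (ry.right j) z
            ((lx i).left p ⊗ₜ[k] ((lx i).right p ⊗ₜ[k] ((rho i).left m ⊗ₜ[k] (rho i).right m))) :=
          Finset.sum_congr rfl fun i _ => Finset.sum_comm
      _ = ∑ j ∈ ry.index, ∑ i ∈ rx.index, ∑ p ∈ (lx i).index, ∑ m ∈ (rho i).index,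
          psiE s' (ry.left j) (ry.right j) z
            ((lx i).left p ⊗ₜ[k] ((lx i).right p ⊗ₜ[k] ((rho i).left m ⊗ₜ[k] (rho i).right m))) :=
          Finset.sum_comm
  have A4 : ∀ j ∈ ry.index,
      ∑ i ∈ rx.index, ∑ p ∈ (lx i).index, ∑ m ∈ (rho i).index,
        psiE s' (ry.left j) (ry.right j) z
          ((lx i).left p ⊗ₜ[k] ((lx i).right p ⊗ₜ[k] ((rho i).left m ⊗ₜ[k] (rho i).right m)))
      = ∑ i ∈ rx.index, ∑ j' ∈ (rho i).index, ∑ t ∈ (rm i j').index,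
        rx.left i ⊗ₜ[k] ((ry.left j * s' ((rho i).right j')) ⊗ₜ[k]
          ((ry.right j * s' ((rm i j').right t)) * ((rm i j').left t * z))) := by
    intro j _
    rw [sum4_22 (psiE s' (ry.left j) (ry.right j) z) rx lx rho,
      ← sum4_mid (psiE s' (ry.left j) (ry.right j) z) rx rho rm]
    exact Finset.sum_congr rfl fun i _ => Finset.sum_congr rfl fun j' _ =>
      Finset.sum_congr rfl fun t _ => psiE_apply s' _ _ _ _ _ _ _
  have A5 : ∀ j i j', ∑ t ∈ (rm i j').index,
        rx.left i ⊗ₜ[k] ((ry.left j * s' ((rho i).right j')) ⊗ₜ[k]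
          ((ry.right j * s' ((rm i j').right t)) * ((rm i j').left t * z)))
      = ε ((rho i).left j') • (rx.left i ⊗ₜ[k] ((ry.left j * s' ((rho i).right j')) ⊗ₜ[k]
          (ry.right j * z))) := by
    intro j i j'
    have h1 : ∀ t, (ry.right j * s' ((rm i j').right t)) * ((rm i j').left t * z)
        = ry.right j * ((s' ((rm i j').right t) * (rm i j').left t) * z) := by
      intro t
      rw [mul_assoc, ← mul_assoc (s' ((rm i j').right t))]
    rw [Finset.sum_congr rfl fun t _ => by rw [h1 t]]
    rw [← TensorProduct.tmul_sum, ← TensorProduct.tmul_sum, ← Finset.mul_sum, ← Finset.sum_mul,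
      K5 s' hs1 hs2 (rm i j'), smul_mul_assoc, one_mul, mul_smul_comm, TensorProduct.tmul_smul,
      TensorProduct.tmul_smul]
  have A6 : ∀ j i, ∑ j' ∈ (rho i).index,
        ε ((rho i).left j') • (rx.left i ⊗ₜ[k] ((ry.left j * s' ((rho i).right j')) ⊗ₜ[k]
          (ry.right j * z)))
      = rx.left i ⊗ₜ[k] ((ry.left j * s' (rx.right i)) ⊗ₜ[k] (ry.right j * z)) := by
    intro j i
    have hsp : ∑ j' ∈ (rho i).index, ε ((rho i).left j') • s' ((rho i).right j')
        = s' (rx.right i) := by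
      have h := congrArg s' (K1 (rho i))
      rw [map_sum] at h
      simp only [map_smul] at h
      exact h
    have e : ∀ j', ε ((rho i).left j') • (rx.left i ⊗ₜ[k]
          ((ry.left j * s' ((rho i).right j')) ⊗ₜ[k] (ry.right j * z)))
        = rx.left i ⊗ₜ[k] ((ry.left j * (ε ((rho i).left j') • s' ((rho i).right j'))) ⊗ₜ[k]
          (ry.right j * z)) := by
      intro j'
      rw [mul_smul_comm, ← TensorProduct.smul_tmul', TensorProduct.tmul_smul]
    rw [Finset.sum_congr rfl fun j' _ => e j', ← TensorProduct.tmul_sum,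
      ← TensorProduct.sum_tmul, ← Finset.mul_sum, hsp]
  have RHS1 : op12 k H (Smap k H s') (op23 k H (Tmap k H) (x ⊗ₜ[k] (y ⊗ₜ[k] z)))
      = ∑ j ∈ ry.index, ∑ i ∈ rx.index,
        rx.left i ⊗ₜ[k] ((ry.left j * s' (rx.right i)) ⊗ₜ[k] (ry.right j * z)) := by
    rw [op23_Tmap x y z ry, map_sum]
    exact Finset.sum_congr rfl fun j _ => op12_Smap s' x (ry.left j) (ry.right j * z) rx
  rw [A3, RHS1]
  refine Finset.sum_congr rfl fun j hj => ?_
  rw [A4 j hj]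
  refine Finset.sum_congr rfl fun i _ => ?_
  rw [Finset.sum_congr rfl fun j' _ => A5 j i j', A6 j i]

end Sprime

end AuxHopfProof

/-- For a Hopf algebra `H` with invertible antipode (with inverse `s'`), the pair
`T(x⊗y) = x₍₁₎ ⊗ x₍₂₎y`, `S(x⊗y) = x₍₁₎ ⊗ y·s'(x₍₂₎)` satisfies
(i) `T₁₃S₂₃ = S₂₃T₁₃`, (ii) `T₂₃T₁₃S₁₂ = S₁₂T₂₃`, (iii) `T₁₂S₁₃S₂₃ = S₂₃T₁₂`. -/
theorem hopf_Tmap_Smap_compatibility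
    {k : Type*} [Field k] {H : Type*} [Semiring H] [HopfAlgebra k H]
    (s' : H →ₗ[k] H)
    (hs1 : (HopfAlgebra.antipode k : H →ₗ[k] H) ∘ₗ s' = LinearMap.id)
    (hs2 : s' ∘ₗ (HopfAlgebra.antipode k : H →ₗ[k] H) = LinearMap.id) :
    (op13 k H (Tmap k H) ∘ₗ op23 k H (Smap k H s')
        = op23 k H (Smap k H s') ∘ₗ op13 k H (Tmap k H)) ∧
    (op23 k H (Tmap k H) ∘ₗ op13 k H (Tmap k H) ∘ₗ op12 k H (Smap k H s')
        = op12 k H (Smap k H s') ∘ₗ op23 k H (Tmap k H)) ∧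
    (op12 k H (Tmap k H) ∘ₗ op13 k H (Smap k H s') ∘ₗ op23 k H (Smap k H s')
        = op23 k H (Smap k H s') ∘ₗ op12 k H (Tmap k H)) := by
  exact ⟨part1 s', part2 s' hs1 hs2, part3 s' hs1 hs2⟩
end

section
/- Let H be a Hopf algebra with invertible antipode s, and define T(x⊗y) = x₍₁₎ ⊗ x₍₂₎y and S(x⊗y) = x₍₁₎ ⊗ y·s⁻¹(x₍₂₎). Then the composite R := S∘T : H⊗H → H⊗H, given by R(x⊗y) = x₍₁₎ ⊗ x₍₃₎·y·s⁻¹(x₍₂₎), satisfies the Yang–Baxter equation R₁₂R₁₃R₂₃ = R₂₃R₁₃R₁₂ on H⊗H⊗H. -/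
open scoped TensorProduct

variable (k : Type*) [Field k] (H : Type*) [Semiring H] [HopfAlgebra k H]

namespace HopfYB






open Coalgebra TensorProduct LinearMap Finset HopfAlgebra

variable {K : Type*} [Field K] {A : Type*} [Semiring A] [HopfAlgebra K A]

/-- collapse `ε(a₁) • f(a₂)`. -/
lemma sum_counit_smul_map {E : Type*} [AddCommMonoid E] [Module K E]
    (f : A →ₗ[K] E) {a : A} {ι : Type*} (r : Coalgebra.Repr K a ι) :
    ∑ i ∈ r.index, counit (R := K) (r.left i) • f (r.right i) = f a := by
  have h := Coalgebra.sum_counit_tmul_eq r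
  have h2 := congrArg ((TensorProduct.lid K E) ∘ (LinearMap.lTensor K f)) h
  simp only [Function.comp_apply, map_sum, LinearMap.lTensor_tmul, TensorProduct.lid_tmul] at h2
  simpa using h2

/-- collapse `ε(a₂) • f(a₁)`. -/
lemma sum_map_smul_counit {E : Type*} [AddCommMonoid E] [Module K E]
    (f : A →ₗ[K] E) {a : A} {ι : Type*} (r : Coalgebra.Repr K a ι) :
    ∑ i ∈ r.index, counit (R := K) (r.right i) • f (r.left i) = f a := by
  have h := Coalgebra.sum_tmul_counit_eq r
  have h2 := congrArg ((TensorProduct.rid K E) ∘ (LinearMap.rTensor K f)) h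
  simp only [Function.comp_apply, map_sum, LinearMap.rTensor_tmul, TensorProduct.rid_tmul] at h2
  simpa using h2

/-- Sweedler coassociativity workhorse. -/
lemma sweedler3 {E : Type*} [AddCommMonoid E] [Module K E]
    (Φ : A ⊗[K] (A ⊗[K] A) →ₗ[K] E) {x : A} {ι ι₁ ι₂ : Type*} (r : Coalgebra.Repr K x ι)
    (r1 : ∀ i : ι, Coalgebra.Repr K (r.left i) ι₁)
    (r2 : ∀ i : ι, Coalgebra.Repr K (r.right i) ι₂) :
    ∑ i ∈ r.index, ∑ j ∈ (r1 i).index,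
      Φ ((r1 i).left j ⊗ₜ[K] ((r1 i).right j ⊗ₜ[K] r.right i)) =
    ∑ i ∈ r.index, ∑ j ∈ (r2 i).index,
      Φ (r.left i ⊗ₜ[K] ((r2 i).left j ⊗ₜ[K] (r2 i).right j)) := by
  simpa [map_sum] using congrArg Φ (Coalgebra.sum_tmul_tmul_eq r r1 r2)

/-- Representation of comul of a product. -/
noncomputable def reprMul {a b : A} {ι κ : Type*} (ra : Coalgebra.Repr K a ι) (rb : Coalgebra.Repr K b κ) :
    Coalgebra.Repr K (a * b) (ι × κ) where
  index := ra.index ×ˢ rb.index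
  left p := ra.left p.1 * rb.left p.2
  right p := ra.right p.1 * rb.right p.2
  eq := by
    rw [Finset.sum_product]
    rw [Bialgebra.comul_mul, ← ra.eq, ← rb.eq, Finset.sum_mul_sum]
    simp [Algebra.TensorProduct.tmul_mul_tmul]

lemma antipode_one : (antipode (R := K) : A →ₗ[K] A) 1 = 1 := by
  have h := HopfAlgebra.mul_antipode_rTensor_comul_apply (R := K) (a := (1 : A))
  have h1 : Coalgebra.comul (R := K) (1 : A) = (1 : A) ⊗ₜ[K] (1 : A) := by
    simpa [Algebra.TensorProduct.one_def] using map_one (Bialgebra.comulAlgHom K A)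
  rw [h1] at h
  simpa using h


/-- convolution product on `Hom(A, B)` for an algebra `B`. -/
noncomputable def conv {B : Type*} [Semiring B] [Algebra K B] (f g : A →ₗ[K] B) :
    A →ₗ[K] B :=
  LinearMap.mul' K B ∘ₗ TensorProduct.map f g ∘ₗ Coalgebra.comul

noncomputable def convUnit {B : Type*} [Semiring B] [Algebra K B] : A →ₗ[K] B :=
  Algebra.linearMap K B ∘ₗ Coalgebra.counit

lemma conv_repr {B : Type*} [Semiring B] [Algebra K B] (f g : A →ₗ[K] B) {a : A}
    {ι : Type*} (r : Coalgebra.Repr K a ι) :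
    conv f g a = ∑ i ∈ r.index, f (r.left i) * g (r.right i) := by
  simp only [conv, LinearMap.comp_apply, ← r.eq, map_sum, TensorProduct.map_tmul,
    LinearMap.mul'_apply]

lemma convUnit_apply {B : Type*} [Semiring B] [Algebra K B] (a : A) :
    (convUnit (K := K) (A := A) (B := B)) a = counit (R := K) a • 1 := by
  simp [convUnit, Algebra.smul_def]

lemma conv_unit_left {B : Type*} [Semiring B] [Algebra K B] (f : A →ₗ[K] B) :
    conv convUnit f = f := by
  ext a
  rw [conv_repr _ _ (ℛ K a)]
  calc ∑ i ∈ (ℛ K a).index, convUnit ((ℛ K a).left i) * f ((ℛ K a).right i)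
      = ∑ i ∈ (ℛ K a).index, counit (R := K) ((ℛ K a).left i) • f ((ℛ K a).right i) := by
        refine Finset.sum_congr rfl fun i _ => ?_
        rw [convUnit_apply, smul_mul_assoc, one_mul]
    _ = f a := sum_counit_smul_map f (ℛ K a)

lemma conv_unit_right {B : Type*} [Semiring B] [Algebra K B] (f : A →ₗ[K] B) :
    conv f convUnit = f := by
  ext a
  rw [conv_repr _ _ (ℛ K a)]
  calc ∑ i ∈ (ℛ K a).index, f ((ℛ K a).left i) * convUnit ((ℛ K a).right i)
      = ∑ i ∈ (ℛ K a).index, counit (R := K) ((ℛ K a).right i) • f ((ℛ K a).left i) := by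
        refine Finset.sum_congr rfl fun i _ => ?_
        rw [convUnit_apply, mul_smul_comm, mul_one]
    _ = f a := sum_map_smul_counit f (ℛ K a)

lemma conv_assoc {B : Type*} [Semiring B] [Algebra K B] (f g h : A →ₗ[K] B) :
    conv (conv f g) h = conv f (conv g h) := by
  ext a
  set r := ℛ K a
  set r1 : ∀ i : A × A, Coalgebra.Repr K (r.left i) (A × A) := fun i => ℛ K (r.left i)
  set r2 : ∀ i : A × A, Coalgebra.Repr K (r.right i) (A × A) := fun i => ℛ K (r.right i)
  have key := sweedler3 (K := K) (A := A)
    (LinearMap.mul' K B ∘ₗ TensorProduct.map f (LinearMap.mul' K B ∘ₗ TensorProduct.map g h))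
    r r1 r2
  simp only [LinearMap.comp_apply, TensorProduct.map_tmul, LinearMap.mul'_apply] at key
  calc conv (conv f g) h a
      = ∑ i ∈ r.index, conv f g (r.left i) * h (r.right i) := conv_repr _ _ r
    _ = ∑ i ∈ r.index, ∑ j ∈ (r1 i).index,
          f ((r1 i).left j) * (g ((r1 i).right j) * h (r.right i)) := by
        refine Finset.sum_congr rfl fun i _ => ?_
        rw [conv_repr _ _ (r1 i), Finset.sum_mul]
        exact Finset.sum_congr rfl fun j _ => mul_assoc _ _ _
    _ = ∑ i ∈ r.index, ∑ j ∈ (r2 i).index,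
          f (r.left i) * (g ((r2 i).left j) * h ((r2 i).right j)) := key
    _ = ∑ i ∈ r.index, f (r.left i) * conv g h (r.right i) := by
        refine Finset.sum_congr rfl fun i _ => ?_
        rw [conv_repr _ _ (r2 i), Finset.mul_sum]
    _ = conv f (conv g h) a := (conv_repr _ _ r).symm

lemma conv_inv_unique {B : Type*} [Semiring B] [Algebra K B] {f g p : A →ₗ[K] B}
    (h1 : conv f g = convUnit) (h2 : conv g p = convUnit) : f = p := by
  have : conv f (conv g p) = conv (conv f g) p := (conv_assoc f g p).symm
  rw [h1, h2, conv_unit_right, conv_unit_left] at this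
  exact this


@[simp] lemma reprMul_index {a b : A} {ι κ : Type*} (ra : Coalgebra.Repr K a ι) (rb : Coalgebra.Repr K b κ) :
    (reprMul ra rb).index = ra.index ×ˢ rb.index := rfl
@[simp] lemma reprMul_left {a b : A} {ι κ : Type*} (ra : Coalgebra.Repr K a ι) (rb : Coalgebra.Repr K b κ)
    (p : ι × κ) : (reprMul ra rb).left p = ra.left p.1 * rb.left p.2 := rfl
@[simp] lemma reprMul_right {a b : A} {ι κ : Type*} (ra : Coalgebra.Repr K a ι) (rb : Coalgebra.Repr K b κ)
    (p : ι × κ) : (reprMul ra rb).right p = ra.right p.1 * rb.right p.2 := rfl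

lemma reprMul_sum {E : Type*} [AddCommMonoid E] {a b : A}
    {ι κ : Type*} (ra : Coalgebra.Repr K a ι) (rb : Coalgebra.Repr K b κ) (F : A → A → E) :
    ∑ x ∈ (reprMul ra rb).index, F ((reprMul ra rb).left x) ((reprMul ra rb).right x)
      = ∑ i ∈ ra.index, ∑ j ∈ rb.index,
          F (ra.left i * rb.left j) (ra.right i * rb.right j) :=
  Finset.sum_product' (s := ra.index) (t := rb.index)
    (f := fun i j => F (ra.left i * rb.left j) (ra.right i * rb.right j))

theorem antipode_mul_anti (a b : A) :
    (antipode (R := K) : A →ₗ[K] A) (a * b) =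
      (antipode (R := K) : A →ₗ[K] A) b * (antipode (R := K) : A →ₗ[K] A) a := by
  set s : A →ₗ[K] A := antipode (R := K) with hs
  set ra := ℛ K a
  set rb := ℛ K b
  set ra1 : ∀ i : A × A, Coalgebra.Repr K (ra.left i) (A × A) := fun i => ℛ K (ra.left i) with hra1
  set ra2 : ∀ i : A × A, Coalgebra.Repr K (ra.right i) (A × A) := fun i => ℛ K (ra.right i) with hra2
  set rb1 : ∀ j : A × A, Coalgebra.Repr K (rb.left j) (A × A) := fun j => ℛ K (rb.left j) with hrb1
  set rb2 : ∀ j : A × A, Coalgebra.Repr K (rb.right j) (A × A) := fun j => ℛ K (rb.right j) with hrb2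
  set M : A := ∑ i ∈ ra.index, ∑ j ∈ rb.index, ∑ p ∈ (ra2 i).index, ∑ q ∈ (rb2 j).index,
      (s (rb.left j) * s (ra.left i)) *
        (((ra2 i).left p * (rb2 j).left q) * s ((ra2 i).right p * (rb2 j).right q)) with hM
  have eq1 : M = s b * s a := by
    have inner : ∀ i ∈ ra.index, ∀ j ∈ rb.index,
        (∑ p ∈ (ra2 i).index, ∑ q ∈ (rb2 j).index,
          (((ra2 i).left p * (rb2 j).left q) * s ((ra2 i).right p * (rb2 j).right q)))
          = (counit (R := K) (ra.right i) * counit (R := K) (rb.right j)) • (1 : A) := by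
      intro i _ j _
      calc ∑ p ∈ (ra2 i).index, ∑ q ∈ (rb2 j).index,
            (((ra2 i).left p * (rb2 j).left q) * s ((ra2 i).right p * (rb2 j).right q))
          = ∑ x ∈ (reprMul (ra2 i) (rb2 j)).index,
              (reprMul (ra2 i) (rb2 j)).left x * s ((reprMul (ra2 i) (rb2 j)).right x) :=
            (reprMul_sum (ra2 i) (rb2 j) (fun u v => u * s v)).symm
        _ = counit (R := K) (ra.right i * rb.right j) • (1 : A) :=
            HopfAlgebra.sum_mul_antipode_eq_smul (R := K) (reprMul (ra2 i) (rb2 j))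
        _ = (counit (R := K) (ra.right i) * counit (R := K) (rb.right j)) • (1 : A) := by
            rw [Bialgebra.counit_mul]
    calc M = ∑ i ∈ ra.index, ∑ j ∈ rb.index,
          (counit (R := K) (ra.right i) * counit (R := K) (rb.right j)) •
            (s (rb.left j) * s (ra.left i)) := by
          rw [hM]
          refine Finset.sum_congr rfl fun i hi => Finset.sum_congr rfl fun j hj => ?_
          simp only [← Finset.mul_sum]
          rw [inner i hi j hj, mul_smul_comm, mul_one]
      _ = ∑ j ∈ rb.index, ∑ i ∈ ra.index,
          (counit (R := K) (rb.right j) • s (rb.left j)) *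
            (counit (R := K) (ra.right i) • s (ra.left i)) := by
          rw [Finset.sum_comm]
          refine Finset.sum_congr rfl fun j _ => Finset.sum_congr rfl fun i _ => ?_
          rw [smul_mul_smul_comm, mul_comm (counit (R := K) (rb.right j))]
      _ = s b * s a := by
          rw [← Finset.sum_mul_sum, sum_map_smul_counit s rb, sum_map_smul_counit s ra]
  have eq2 : M = s (a * b) := by
    have reorder : M = ∑ j ∈ rb.index, ∑ q ∈ (rb2 j).index, ∑ i ∈ ra.index,
        ∑ p ∈ (ra2 i).index,
        (s (rb.left j) * s (ra.left i)) *
          (((ra2 i).left p * (rb2 j).left q) * s ((ra2 i).right p * (rb2 j).right q)) := by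
      rw [hM, Finset.sum_comm]
      refine Finset.sum_congr rfl fun j _ => ?_
      calc ∑ i ∈ ra.index, ∑ p ∈ (ra2 i).index, ∑ q ∈ (rb2 j).index,
            (s (rb.left j) * s (ra.left i)) *
              (((ra2 i).left p * (rb2 j).left q) * s ((ra2 i).right p * (rb2 j).right q))
          = ∑ i ∈ ra.index, ∑ q ∈ (rb2 j).index, ∑ p ∈ (ra2 i).index,
            (s (rb.left j) * s (ra.left i)) *
              (((ra2 i).left p * (rb2 j).left q) * s ((ra2 i).right p * (rb2 j).right q)) :=
            Finset.sum_congr rfl fun i _ => Finset.sum_comm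
        _ = _ := Finset.sum_comm
    rw [reorder]
    have step1 : ∀ j ∈ rb.index, ∀ q ∈ (rb2 j).index,
        (∑ i ∈ ra.index, ∑ p ∈ (ra2 i).index,
          (s (rb.left j) * s (ra.left i)) *
            (((ra2 i).left p * (rb2 j).left q) * s ((ra2 i).right p * (rb2 j).right q)))
        = s (rb.left j) * ((rb2 j).left q * s (a * (rb2 j).right q)) := by
      intro j _ q _
      have key := sweedler3 (K := K) (A := A)
        (LinearMap.mul' K A ∘ₗ TensorProduct.map (LinearMap.mulLeft K (s (rb.left j)) ∘ₗ s)
          (LinearMap.mul' K A ∘ₗ TensorProduct.map (LinearMap.mulRight K ((rb2 j).left q))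
            (s ∘ₗ LinearMap.mulRight K ((rb2 j).right q)))) ra ra1 ra2
      simp only [LinearMap.comp_apply, TensorProduct.map_tmul, LinearMap.mul'_apply,
        LinearMap.mulLeft_apply, LinearMap.mulRight_apply] at key
      rw [← key]
      calc ∑ i ∈ ra.index, ∑ m ∈ (ra1 i).index,
            (s (rb.left j) * s ((ra1 i).left m)) *
              (((ra1 i).right m * (rb2 j).left q) * s (ra.right i * (rb2 j).right q))
          = ∑ i ∈ ra.index, counit (R := K) (ra.left i) •
              (s (rb.left j) * ((rb2 j).left q * s (ra.right i * (rb2 j).right q))) := by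
            refine Finset.sum_congr rfl fun i _ => ?_
            have collapse := HopfAlgebra.sum_antipode_mul_eq_smul (R := K) (ra1 i)
            calc ∑ m ∈ (ra1 i).index,
                  (s (rb.left j) * s ((ra1 i).left m)) *
                    (((ra1 i).right m * (rb2 j).left q) * s (ra.right i * (rb2 j).right q))
                = ∑ m ∈ (ra1 i).index, s (rb.left j) *
                    ((s ((ra1 i).left m) * (ra1 i).right m) *
                      ((rb2 j).left q * s (ra.right i * (rb2 j).right q))) :=
                  Finset.sum_congr rfl fun m _ => by simp only [mul_assoc]
              _ = s (rb.left j) *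
                  ((∑ m ∈ (ra1 i).index, s ((ra1 i).left m) * (ra1 i).right m) *
                    ((rb2 j).left q * s (ra.right i * (rb2 j).right q))) := by
                  rw [← Finset.mul_sum, ← Finset.sum_mul]
              _ = counit (R := K) (ra.left i) •
                  (s (rb.left j) * ((rb2 j).left q * s (ra.right i * (rb2 j).right q))) := by
                  rw [collapse, smul_mul_assoc, one_mul, mul_smul_comm]
        _ = s (rb.left j) * ((rb2 j).left q * s (a * (rb2 j).right q)) :=
            sum_counit_smul_map (LinearMap.mulLeft K (s (rb.left j)) ∘ₗ
              LinearMap.mulLeft K ((rb2 j).left q) ∘ₗ s ∘ₗ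
              LinearMap.mulRight K ((rb2 j).right q)) ra
    rw [Finset.sum_congr rfl fun j hj => Finset.sum_congr rfl fun q hq => step1 j hj q hq]
    have key := sweedler3 (K := K) (A := A)
      (LinearMap.mul' K A ∘ₗ TensorProduct.map s
        (LinearMap.mul' K A ∘ₗ TensorProduct.map LinearMap.id (s ∘ₗ LinearMap.mulLeft K a)))
      rb rb1 rb2
    simp only [LinearMap.comp_apply, TensorProduct.map_tmul, LinearMap.mul'_apply,
      LinearMap.mulLeft_apply, LinearMap.id_coe, id_eq] at key
    rw [← key]
    calc ∑ j ∈ rb.index, ∑ m ∈ (rb1 j).index,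
          s ((rb1 j).left m) * ((rb1 j).right m * s (a * rb.right j))
        = ∑ j ∈ rb.index, counit (R := K) (rb.left j) • s (a * rb.right j) := by
          refine Finset.sum_congr rfl fun j _ => ?_
          have collapse := HopfAlgebra.sum_antipode_mul_eq_smul (R := K) (rb1 j)
          calc ∑ m ∈ (rb1 j).index, s ((rb1 j).left m) * ((rb1 j).right m * s (a * rb.right j))
              = (∑ m ∈ (rb1 j).index, s ((rb1 j).left m) * (rb1 j).right m) *
                  s (a * rb.right j) := by
                rw [Finset.sum_mul]
                exact Finset.sum_congr rfl fun m _ => (mul_assoc _ _ _).symm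
            _ = counit (R := K) (rb.left j) • s (a * rb.right j) := by
                rw [collapse, smul_mul_assoc, one_mul]
      _ = s (a * b) := sum_counit_smul_map (s ∘ₗ LinearMap.mulLeft K a) rb
  rw [← eq2, eq1]


lemma comul_one' : Coalgebra.comul (R := K) (1 : A) = (1 : A ⊗[K] A) := by
  simpa using map_one (Bialgebra.comulAlgHom K A)

/-- the candidate for `comul ∘ antipode`. -/
noncomputable def acomul : A →ₗ[K] A ⊗[K] A :=
  (TensorProduct.comm K A A).toLinearMap ∘ₗ
    TensorProduct.map (antipode (R := K)) (antipode (R := K)) ∘ₗ Coalgebra.comul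

lemma acomul_repr {x : A} {ι : Type*} (rx : Coalgebra.Repr K x ι) :
    acomul (K := K) (A := A) x = ∑ m ∈ rx.index,
      (antipode (R := K) : A →ₗ[K] A) (rx.right m) ⊗ₜ[K]
        (antipode (R := K) : A →ₗ[K] A) (rx.left m) := by
  simp only [acomul, LinearMap.comp_apply, ← rx.eq, map_sum, TensorProduct.map_tmul,
    LinearEquiv.coe_coe, TensorProduct.comm_tmul]

lemma conv_acomul_comul :
    conv (acomul (K := K) (A := A)) Coalgebra.comul = convUnit := by
  ext a
  set s : A →ₗ[K] A := antipode (R := K) with hs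
  set r := ℛ K a
  set r1 : ∀ i : A × A, Coalgebra.Repr K (r.left i) (A × A) := fun i => ℛ K (r.left i) with hr1
  set r2 : ∀ i : A × A, Coalgebra.Repr K (r.right i) (A × A) := fun i => ℛ K (r.right i) with hr2
  have key := sweedler3 (K := K) (A := A)
    (LinearMap.mul' K (A ⊗[K] A) ∘ₗ
      TensorProduct.map
        ((TensorProduct.comm K A A).toLinearMap ∘ₗ TensorProduct.map s s)
        Coalgebra.comul ∘ₗ
      (TensorProduct.assoc K A A A).symm.toLinearMap) r r1 r2
  simp only [LinearMap.comp_apply, LinearEquiv.coe_coe, TensorProduct.assoc_symm_tmul,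
    TensorProduct.map_tmul, TensorProduct.comm_tmul, LinearMap.mul'_apply] at key
  calc conv (acomul (K := K) (A := A)) Coalgebra.comul a
      = ∑ i ∈ r.index, acomul (K := K) (A := A) (r.left i) *
          Coalgebra.comul (r.right i) := conv_repr _ _ r
    _ = ∑ i ∈ r.index, ∑ m ∈ (r1 i).index,
        (s ((r1 i).right m) ⊗ₜ[K] s ((r1 i).left m)) * Coalgebra.comul (r.right i) := by
        refine Finset.sum_congr rfl fun i _ => ?_
        rw [acomul_repr (r1 i), Finset.sum_mul]
    _ = ∑ i ∈ r.index, ∑ q ∈ (r2 i).index,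
        (s ((r2 i).left q) ⊗ₜ[K] s (r.left i)) * Coalgebra.comul ((r2 i).right q) := key
    _ = ∑ i ∈ r.index, (1 : A) ⊗ₜ[K] (s (r.left i) * r.right i) := by
        refine Finset.sum_congr rfl fun i _ => ?_
        set r21 : ∀ q : A × A, Coalgebra.Repr K ((r2 i).left q) (A × A) :=
          fun q => ℛ K ((r2 i).left q) with hr21
        set r22 : ∀ q : A × A, Coalgebra.Repr K ((r2 i).right q) (A × A) :=
          fun q => ℛ K ((r2 i).right q) with hr22
        have key2 := sweedler3 (K := K) (A := A)
          (TensorProduct.map (LinearMap.mul' K A ∘ₗ TensorProduct.map s LinearMap.id)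
              (LinearMap.mulLeft K (s (r.left i))) ∘ₗ
            (TensorProduct.assoc K A A A).symm.toLinearMap) (r2 i) r21 r22
        simp only [LinearMap.comp_apply, LinearEquiv.coe_coe, TensorProduct.assoc_symm_tmul,
          TensorProduct.map_tmul, LinearMap.mul'_apply, LinearMap.mulLeft_apply,
          LinearMap.id_coe, id_eq] at key2
        calc ∑ q ∈ (r2 i).index,
              (s ((r2 i).left q) ⊗ₜ[K] s (r.left i)) * Coalgebra.comul ((r2 i).right q)
            = ∑ q ∈ (r2 i).index, ∑ n ∈ (r22 q).index,
              (s ((r2 i).left q) * (r22 q).left n) ⊗ₜ[K] (s (r.left i) * (r22 q).right n) := by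
              refine Finset.sum_congr rfl fun q _ => ?_
              rw [← (r22 q).eq, Finset.mul_sum]
              exact Finset.sum_congr rfl fun n _ => Algebra.TensorProduct.tmul_mul_tmul _ _ _ _
          _ = ∑ q ∈ (r2 i).index, ∑ m ∈ (r21 q).index,
              (s ((r21 q).left m) * (r21 q).right m) ⊗ₜ[K] (s (r.left i) * (r2 i).right q) :=
              key2.symm
          _ = ∑ q ∈ (r2 i).index, counit (R := K) ((r2 i).left q) •
              ((1 : A) ⊗ₜ[K] (s (r.left i) * (r2 i).right q)) := by
              refine Finset.sum_congr rfl fun q _ => ?_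
              rw [← TensorProduct.sum_tmul, HopfAlgebra.sum_antipode_mul_eq_smul (R := K) (r21 q),
                TensorProduct.smul_tmul']
          _ = (1 : A) ⊗ₜ[K] (s (r.left i) * r.right i) := by
              have hc := sum_counit_smul_map
                ((TensorProduct.mk K A A 1) ∘ₗ LinearMap.mulLeft K (s (r.left i))) (r2 i)
              simp only [LinearMap.comp_apply, TensorProduct.mk_apply,
                LinearMap.mulLeft_apply] at hc
              exact hc
    _ = convUnit a := by
        rw [← TensorProduct.tmul_sum, HopfAlgebra.sum_antipode_mul_eq_smul (R := K) r,
          TensorProduct.tmul_smul, convUnit_apply]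
        rw [Algebra.TensorProduct.one_def]

lemma conv_comul_comul_antipode :
    conv Coalgebra.comul (Coalgebra.comul ∘ₗ (antipode (R := K) : A →ₗ[K] A)) = convUnit := by
  ext a
  set s : A →ₗ[K] A := antipode (R := K) with hs
  set r := ℛ K a
  calc conv Coalgebra.comul (Coalgebra.comul ∘ₗ s) a
      = ∑ i ∈ r.index, Coalgebra.comul (r.left i) * (Coalgebra.comul ∘ₗ s) (r.right i) :=
        conv_repr _ _ r
    _ = ∑ i ∈ r.index, Coalgebra.comul (R := K) (r.left i * s (r.right i)) := by
        refine Finset.sum_congr rfl fun i _ => ?_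
        rw [LinearMap.comp_apply, ← Bialgebra.comul_mul]
    _ = Coalgebra.comul (R := K) (∑ i ∈ r.index, r.left i * s (r.right i)) :=
        (map_sum _ _ _).symm
    _ = convUnit a := by
        rw [HopfAlgebra.sum_mul_antipode_eq_smul (R := K) r, map_smul, comul_one',
          convUnit_apply]

theorem comul_antipode :
    Coalgebra.comul (R := K) ∘ₗ (antipode (R := K) : A →ₗ[K] A) = acomul := by
  exact (conv_inv_unique conv_acomul_comul conv_comul_comul_antipode).symm

lemma comul_antipode_apply (x : A) :
    Coalgebra.comul (R := K) ((antipode (R := K) : A →ₗ[K] A) x) = acomul (K := K) x := by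
  exact LinearMap.congr_fun (comul_antipode (K := K) (A := A)) x


section inv

variable (s' : A →ₗ[K] A)

lemma s_s' (hs1 : (antipode (R := K) : A →ₗ[K] A) ∘ₗ s' = LinearMap.id) (x : A) :
    (antipode (R := K) : A →ₗ[K] A) (s' x) = x := by
  simpa using LinearMap.congr_fun hs1 x

lemma s'_s (hs2 : s' ∘ₗ (antipode (R := K) : A →ₗ[K] A) = LinearMap.id) (x : A) :
    s' ((antipode (R := K) : A →ₗ[K] A) x) = x := by
  simpa using LinearMap.congr_fun hs2 x

lemma s'_one (hs2 : s' ∘ₗ (antipode (R := K) : A →ₗ[K] A) = LinearMap.id) :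
    s' (1 : A) = 1 := by
  have := s'_s s' hs2 (1 : A)
  rwa [antipode_one] at this

lemma s'_mul (hs1 : (antipode (R := K) : A →ₗ[K] A) ∘ₗ s' = LinearMap.id)
    (hs2 : s' ∘ₗ (antipode (R := K) : A →ₗ[K] A) = LinearMap.id) (a b : A) :
    s' (a * b) = s' b * s' a := by
  have h : a * b = (antipode (R := K) : A →ₗ[K] A) (s' b * s' a) := by
    rw [antipode_mul_anti, s_s' s' hs1, s_s' s' hs1]
  rw [h, s'_s s' hs2]

lemma comm_comm (y : A ⊗[K] A) :
    (TensorProduct.comm K A A) ((TensorProduct.comm K A A) y) = y := by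
  have h : (TensorProduct.comm K A A).toLinearMap ∘ₗ (TensorProduct.comm K A A).toLinearMap
      = LinearMap.id := TensorProduct.ext' fun u v => by simp
  simpa using LinearMap.congr_fun h y

lemma map_s'_s'_map_s_s
    (hs2 : s' ∘ₗ (antipode (R := K) : A →ₗ[K] A) = LinearMap.id) (y : A ⊗[K] A) :
    TensorProduct.map s' s'
      (TensorProduct.map (antipode (R := K)) (antipode (R := K)) y) = y := by
  have h : TensorProduct.map s' s' ∘ₗ
      TensorProduct.map (antipode (R := K) : A →ₗ[K] A) (antipode (R := K)) = LinearMap.id :=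
    TensorProduct.ext' fun u v => by simp [s'_s s' hs2]
  simpa using LinearMap.congr_fun h y

/-- representation of `comul (s' x)` from one of `comul x`. -/
noncomputable def reprS'
    (hs1 : (antipode (R := K) : A →ₗ[K] A) ∘ₗ s' = LinearMap.id)
    (hs2 : s' ∘ₗ (antipode (R := K) : A →ₗ[K] A) = LinearMap.id)
    {x : A} {ι : Type*} (rx : Coalgebra.Repr K x ι) : Coalgebra.Repr K (s' x) ι where
  index := rx.index
  left i := s' (rx.right i)
  right i := s' (rx.left i)
  eq := by
    have h1 : Coalgebra.comul (R := K) x = acomul (s' x) := by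
      conv_lhs => rw [← s_s' s' hs1 x]
      exact comul_antipode_apply _
    have h2 := congrArg (fun y => TensorProduct.map s' s' ((TensorProduct.comm K A A) y)) h1
    simp only [acomul, LinearMap.comp_apply, LinearEquiv.coe_coe] at h2
    rw [comm_comm, map_s'_s'_map_s_s s' hs2] at h2
    rw [← h2, ← rx.eq]
    simp only [map_sum, LinearEquiv.coe_coe, TensorProduct.comm_tmul, TensorProduct.map_tmul]

@[simp] lemma reprS'_index (hs1 : (antipode (R := K) : A →ₗ[K] A) ∘ₗ s' = LinearMap.id)
    (hs2 : s' ∘ₗ (antipode (R := K) : A →ₗ[K] A) = LinearMap.id)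
    {x : A} {ι : Type*} (rx : Coalgebra.Repr K x ι) : (reprS' s' hs1 hs2 rx).index = rx.index := rfl
@[simp] lemma reprS'_left (hs1 : (antipode (R := K) : A →ₗ[K] A) ∘ₗ s' = LinearMap.id)
    (hs2 : s' ∘ₗ (antipode (R := K) : A →ₗ[K] A) = LinearMap.id)
    {x : A} {ι : Type*} (rx : Coalgebra.Repr K x ι) (i : ι) :
    (reprS' s' hs1 hs2 rx).left i = s' (rx.right i) := rfl
@[simp] lemma reprS'_right (hs1 : (antipode (R := K) : A →ₗ[K] A) ∘ₗ s' = LinearMap.id)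
    (hs2 : s' ∘ₗ (antipode (R := K) : A →ₗ[K] A) = LinearMap.id)
    {x : A} {ι : Type*} (rx : Coalgebra.Repr K x ι) (i : ι) :
    (reprS' s' hs1 hs2 rx).right i = s' (rx.left i) := rfl

lemma sum_s'_mul (hs1 : (antipode (R := K) : A →ₗ[K] A) ∘ₗ s' = LinearMap.id)
    (hs2 : s' ∘ₗ (antipode (R := K) : A →ₗ[K] A) = LinearMap.id)
    {a : A} {ι : Type*} (r : Coalgebra.Repr K a ι) :
    ∑ i ∈ r.index, s' (r.right i) * r.left i = counit (R := K) a • (1 : A) := by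
  have h0 : (antipode (R := K) : A →ₗ[K] A) (∑ i ∈ r.index, s' (r.right i) * r.left i)
      = counit (R := K) a • (1 : A) := by
    rw [map_sum]
    calc ∑ i ∈ r.index, (antipode (R := K) : A →ₗ[K] A) (s' (r.right i) * r.left i)
        = ∑ i ∈ r.index,
            (antipode (R := K) : A →ₗ[K] A) (r.left i) * r.right i := by
          refine Finset.sum_congr rfl fun i _ => ?_
          rw [antipode_mul_anti, s_s' s' hs1]
      _ = counit (R := K) a • (1 : A) := HopfAlgebra.sum_antipode_mul_eq_smul (R := K) r
  calc ∑ i ∈ r.index, s' (r.right i) * r.left i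
      = s' ((antipode (R := K) : A →ₗ[K] A) (∑ i ∈ r.index, s' (r.right i) * r.left i)) :=
        (s'_s s' hs2 _).symm
    _ = s' (counit (R := K) a • (1 : A)) := by rw [h0]
    _ = counit (R := K) a • (1 : A) := by rw [map_smul, s'_one s' hs2]

lemma sum_mul_s' (hs1 : (antipode (R := K) : A →ₗ[K] A) ∘ₗ s' = LinearMap.id)
    (hs2 : s' ∘ₗ (antipode (R := K) : A →ₗ[K] A) = LinearMap.id)
    {a : A} {ι : Type*} (r : Coalgebra.Repr K a ι) :
    ∑ i ∈ r.index, r.right i * s' (r.left i) = counit (R := K) a • (1 : A) := by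
  have h0 : (antipode (R := K) : A →ₗ[K] A) (∑ i ∈ r.index, r.right i * s' (r.left i))
      = counit (R := K) a • (1 : A) := by
    rw [map_sum]
    calc ∑ i ∈ r.index, (antipode (R := K) : A →ₗ[K] A) (r.right i * s' (r.left i))
        = ∑ i ∈ r.index,
            r.left i * (antipode (R := K) : A →ₗ[K] A) (r.right i) := by
          refine Finset.sum_congr rfl fun i _ => ?_
          rw [antipode_mul_anti, s_s' s' hs1]
      _ = counit (R := K) a • (1 : A) := HopfAlgebra.sum_mul_antipode_eq_smul (R := K) r
  calc ∑ i ∈ r.index, r.right i * s' (r.left i)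
      = s' ((antipode (R := K) : A →ₗ[K] A) (∑ i ∈ r.index, r.right i * s' (r.left i))) :=
        (s'_s s' hs2 _).symm
    _ = s' (counit (R := K) a • (1 : A)) := by rw [h0]
    _ = counit (R := K) a • (1 : A) := by rw [map_smul, s'_one s' hs2]

end inv


section blocks

lemma ext_threefold' {E : Type*} [AddCommMonoid E] [Module K E]
    {g h : A ⊗[K] (A ⊗[K] A) →ₗ[K] E}
    (H : ∀ x y z : A, g (x ⊗ₜ (y ⊗ₜ z)) = h (x ⊗ₜ (y ⊗ₜ z))) : g = h := by
  ext x y z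
  exact H x y z

lemma Tmap_tmul (x y : A) {ι : Type*} (r : Coalgebra.Repr K x ι) :
    Tmap K A (x ⊗ₜ[K] y) = ∑ i ∈ r.index, r.left i ⊗ₜ[K] (r.right i * y) := by
  simp only [Tmap, LinearMap.comp_apply, LinearMap.rTensor_tmul, ← r.eq]
  simp only [TensorProduct.sum_tmul, map_sum, LinearEquiv.coe_coe, TensorProduct.assoc_tmul,
    LinearMap.lTensor_tmul, LinearMap.mul'_apply]

lemma Smap_tmul (s' : A →ₗ[K] A) (x y : A) {ι : Type*} (r : Coalgebra.Repr K x ι) :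
    Smap K A s' (x ⊗ₜ[K] y) = ∑ i ∈ r.index, r.left i ⊗ₜ[K] (y * s' (r.right i)) := by
  simp only [Smap, LinearMap.comp_apply, LinearMap.rTensor_tmul, ← r.eq]
  simp only [TensorProduct.sum_tmul, map_sum, LinearEquiv.coe_coe, TensorProduct.assoc_tmul,
    LinearMap.lTensor_tmul, LinearMap.comp_apply, LinearMap.rTensor_tmul,
    TensorProduct.comm_tmul, LinearMap.mul'_apply]

lemma sw23_tmul (x y z : A) : sw23 K A (x ⊗ₜ[K] (y ⊗ₜ[K] z)) = x ⊗ₜ[K] (z ⊗ₜ[K] y) := by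
  simp [sw23]

lemma op12_T (x y z : A) {ι : Type*} (r : Coalgebra.Repr K x ι) :
    op12 K A (Tmap K A) (x ⊗ₜ[K] (y ⊗ₜ[K] z))
      = ∑ i ∈ r.index, r.left i ⊗ₜ[K] ((r.right i * y) ⊗ₜ[K] z) := by
  simp only [op12, LinearMap.comp_apply, LinearEquiv.coe_coe, TensorProduct.assoc_symm_tmul,
    LinearMap.rTensor_tmul]
  rw [Tmap_tmul x y r]
  simp only [TensorProduct.sum_tmul, map_sum, TensorProduct.assoc_tmul]

lemma op12_S (s' : A →ₗ[K] A) (x y z : A) {ι : Type*} (r : Coalgebra.Repr K x ι) :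
    op12 K A (Smap K A s') (x ⊗ₜ[K] (y ⊗ₜ[K] z))
      = ∑ i ∈ r.index, r.left i ⊗ₜ[K] ((y * s' (r.right i)) ⊗ₜ[K] z) := by
  simp only [op12, LinearMap.comp_apply, LinearEquiv.coe_coe, TensorProduct.assoc_symm_tmul,
    LinearMap.rTensor_tmul]
  rw [Smap_tmul s' x y r]
  simp only [TensorProduct.sum_tmul, map_sum, TensorProduct.assoc_tmul]

lemma op23_T (x y z : A) {ι : Type*} (r : Coalgebra.Repr K y ι) :
    op23 K A (Tmap K A) (x ⊗ₜ[K] (y ⊗ₜ[K] z))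
      = ∑ j ∈ r.index, x ⊗ₜ[K] (r.left j ⊗ₜ[K] (r.right j * z)) := by
  simp only [op23, LinearMap.lTensor_tmul]
  rw [Tmap_tmul y z r, TensorProduct.tmul_sum]

lemma op23_S (s' : A →ₗ[K] A) (x y z : A) {ι : Type*} (r : Coalgebra.Repr K y ι) :
    op23 K A (Smap K A s') (x ⊗ₜ[K] (y ⊗ₜ[K] z))
      = ∑ j ∈ r.index, x ⊗ₜ[K] (r.left j ⊗ₜ[K] (z * s' (r.right j))) := by
  simp only [op23, LinearMap.lTensor_tmul]
  rw [Smap_tmul s' y z r, TensorProduct.tmul_sum]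

lemma op13_T (x y z : A) {ι : Type*} (r : Coalgebra.Repr K x ι) :
    op13 K A (Tmap K A) (x ⊗ₜ[K] (y ⊗ₜ[K] z))
      = ∑ i ∈ r.index, r.left i ⊗ₜ[K] (y ⊗ₜ[K] (r.right i * z)) := by
  simp only [op13, LinearMap.comp_apply]
  rw [sw23_tmul, op12_T x z y r, map_sum]
  exact Finset.sum_congr rfl fun i _ => sw23_tmul _ _ _

lemma op13_S (s' : A →ₗ[K] A) (x y z : A) {ι : Type*} (r : Coalgebra.Repr K x ι) :
    op13 K A (Smap K A s') (x ⊗ₜ[K] (y ⊗ₜ[K] z))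
      = ∑ i ∈ r.index, r.left i ⊗ₜ[K] (y ⊗ₜ[K] (z * s' (r.right i))) := by
  simp only [op13, LinearMap.comp_apply]
  rw [sw23_tmul, op12_S s' x z y r, map_sum]
  exact Finset.sum_congr rfl fun i _ => sw23_tmul _ _ _

/-- relation 3: `T₂₃ S₁₃ = S₁₃ T₂₃`. -/
lemma rel3 (s' : A →ₗ[K] A) :
    op23 K A (Tmap K A) ∘ₗ op13 K A (Smap K A s')
      = op13 K A (Smap K A s') ∘ₗ op23 K A (Tmap K A) := by
  refine ext_threefold' fun x y z => ?_
  simp only [LinearMap.comp_apply]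
  rw [op13_S s' x y z (ℛ K x), map_sum, op23_T x y z (ℛ K y), map_sum]
  rw [Finset.sum_congr rfl fun i _ => op23_T _ _ _ (ℛ K y)]
  rw [Finset.sum_congr rfl fun j _ => op13_S s' _ _ _ (ℛ K x)]
  rw [Finset.sum_comm]
  simp only [mul_assoc]

/-- relation 3': `T₁₃ S₂₃ = S₂₃ T₁₃`. -/
lemma rel3' (s' : A →ₗ[K] A) :
    op13 K A (Tmap K A) ∘ₗ op23 K A (Smap K A s')
      = op23 K A (Smap K A s') ∘ₗ op13 K A (Tmap K A) := by
  refine ext_threefold' fun x y z => ?_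
  simp only [LinearMap.comp_apply]
  rw [op23_S s' x y z (ℛ K y), map_sum, op13_T x y z (ℛ K x), map_sum]
  rw [Finset.sum_congr rfl fun j _ => op13_T _ _ _ (ℛ K x)]
  rw [Finset.sum_congr rfl fun i _ => op23_S s' _ _ _ (ℛ K y)]
  rw [Finset.sum_comm]
  simp only [mul_assoc]

/-- the pentagon equation for `T`. -/
lemma pentagonT :
    op12 K A (Tmap K A) ∘ₗ op13 K A (Tmap K A) ∘ₗ op23 K A (Tmap K A)
      = op23 K A (Tmap K A) ∘ₗ op12 K A (Tmap K A) := by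
  refine ext_threefold' fun x y z => ?_
  set rx := ℛ K x with hrx
  set ry := ℛ K y with hry
  set rx1 : ∀ i : A × A, Coalgebra.Repr K (rx.left i) (A × A) := fun i => ℛ K (rx.left i) with hrx1
  set rx2 : ∀ i : A × A, Coalgebra.Repr K (rx.right i) (A × A) := fun i => ℛ K (rx.right i) with hrx2
  simp only [LinearMap.comp_apply]
  calc op12 K A (Tmap K A) (op13 K A (Tmap K A) (op23 K A (Tmap K A) (x ⊗ₜ (y ⊗ₜ z))))
      = ∑ q ∈ ry.index, op12 K A (Tmap K A)
          (op13 K A (Tmap K A) (x ⊗ₜ (ry.left q ⊗ₜ (ry.right q * z)))) := by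
        rw [op23_T x y z ry, map_sum, map_sum]
    _ = ∑ q ∈ ry.index, ∑ i ∈ rx.index, op12 K A (Tmap K A)
          (rx.left i ⊗ₜ (ry.left q ⊗ₜ (rx.right i * (ry.right q * z)))) := by
        refine Finset.sum_congr rfl fun q _ => ?_
        rw [op13_T x _ _ rx, map_sum]
    _ = ∑ q ∈ ry.index, ∑ i ∈ rx.index, ∑ m ∈ (rx1 i).index,
          (rx1 i).left m ⊗ₜ[K] (((rx1 i).right m * ry.left q) ⊗ₜ[K]
            (rx.right i * (ry.right q * z))) := by
        refine Finset.sum_congr rfl fun q _ => Finset.sum_congr rfl fun i _ => ?_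
        rw [op12_T _ _ _ (rx1 i)]
    _ = ∑ q ∈ ry.index, ∑ i ∈ rx.index, ∑ p ∈ (rx2 i).index,
          rx.left i ⊗ₜ[K] (((rx2 i).left p * ry.left q) ⊗ₜ[K]
            ((rx2 i).right p * (ry.right q * z))) := by
        refine Finset.sum_congr rfl fun q _ => ?_
        have key := sweedler3 (K := K) (A := A)
          (TensorProduct.map LinearMap.id
            (TensorProduct.map (LinearMap.mulRight K (ry.left q))
              (LinearMap.mulRight K (ry.right q * z)))) rx rx1 rx2
        simp only [TensorProduct.map_tmul, LinearMap.id_coe, id_eq,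
          LinearMap.mulRight_apply] at key
        exact key
    _ = ∑ i ∈ rx.index, ∑ p ∈ (rx2 i).index, ∑ q ∈ ry.index,
          rx.left i ⊗ₜ[K] (((rx2 i).left p * ry.left q) ⊗ₜ[K]
            ((rx2 i).right p * ry.right q * z)) := by
        rw [Finset.sum_comm]
        refine Finset.sum_congr rfl fun i _ => ?_
        rw [Finset.sum_comm]
        simp only [mul_assoc]
    _ = op23 K A (Tmap K A) (op12 K A (Tmap K A) (x ⊗ₜ (y ⊗ₜ z))) := by
        rw [op12_T x y z rx, map_sum]
        refine Finset.sum_congr rfl fun i _ => ?_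
        rw [op23_T _ _ _ (reprMul (rx2 i) ry)]
        exact (reprMul_sum (rx2 i) ry
          (fun u v => rx.left i ⊗ₜ[K] (u ⊗ₜ[K] (v * z)))).symm

/-- relation 4 : `T₁₂ S₁₃ S₂₃ = S₂₃ T₁₂`. -/
lemma rel4 (s' : A →ₗ[K] A)
    (hs1 : (antipode (R := K) : A →ₗ[K] A) ∘ₗ s' = LinearMap.id)
    (hs2 : s' ∘ₗ (antipode (R := K) : A →ₗ[K] A) = LinearMap.id) :
    op12 K A (Tmap K A) ∘ₗ op13 K A (Smap K A s') ∘ₗ op23 K A (Smap K A s')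
      = op23 K A (Smap K A s') ∘ₗ op12 K A (Tmap K A) := by
  refine ext_threefold' fun x y z => ?_
  set rx := ℛ K x with hrx
  set ry := ℛ K y with hry
  set rx1 : ∀ i : A × A, Coalgebra.Repr K (rx.left i) (A × A) := fun i => ℛ K (rx.left i) with hrx1
  set rx2 : ∀ i : A × A, Coalgebra.Repr K (rx.right i) (A × A) := fun i => ℛ K (rx.right i) with hrx2
  simp only [LinearMap.comp_apply]
  calc op12 K A (Tmap K A) (op13 K A (Smap K A s') (op23 K A (Smap K A s') (x ⊗ₜ (y ⊗ₜ z))))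
      = ∑ q ∈ ry.index, op12 K A (Tmap K A)
          (op13 K A (Smap K A s') (x ⊗ₜ (ry.left q ⊗ₜ (z * s' (ry.right q))))) := by
        rw [op23_S s' x y z ry, map_sum, map_sum]
    _ = ∑ q ∈ ry.index, ∑ i ∈ rx.index, op12 K A (Tmap K A)
          (rx.left i ⊗ₜ (ry.left q ⊗ₜ (z * s' (ry.right q) * s' (rx.right i)))) := by
        refine Finset.sum_congr rfl fun q _ => ?_
        rw [op13_S s' x _ _ rx, map_sum]
    _ = ∑ q ∈ ry.index, ∑ i ∈ rx.index, ∑ m ∈ (rx1 i).index,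
          (rx1 i).left m ⊗ₜ[K] (((rx1 i).right m * ry.left q) ⊗ₜ[K]
            (z * s' (ry.right q) * s' (rx.right i))) := by
        refine Finset.sum_congr rfl fun q _ => Finset.sum_congr rfl fun i _ => ?_
        rw [op12_T _ _ _ (rx1 i)]
    _ = ∑ q ∈ ry.index, ∑ i ∈ rx.index, ∑ p ∈ (rx2 i).index,
          rx.left i ⊗ₜ[K] (((rx2 i).left p * ry.left q) ⊗ₜ[K]
            (z * s' (ry.right q) * s' ((rx2 i).right p))) := by
        refine Finset.sum_congr rfl fun q _ => ?_
        have key := sweedler3 (K := K) (A := A)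
          (TensorProduct.map LinearMap.id
            (TensorProduct.map (LinearMap.mulRight K (ry.left q))
              (LinearMap.mulLeft K (z * s' (ry.right q)) ∘ₗ s'))) rx rx1 rx2
        simp only [TensorProduct.map_tmul, LinearMap.id_coe, id_eq, LinearMap.comp_apply,
          LinearMap.mulRight_apply, LinearMap.mulLeft_apply] at key
        exact key
    _ = ∑ i ∈ rx.index, ∑ p ∈ (rx2 i).index, ∑ q ∈ ry.index,
          rx.left i ⊗ₜ[K] (((rx2 i).left p * ry.left q) ⊗ₜ[K]
            (z * s' ((rx2 i).right p * ry.right q))) := by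
        rw [Finset.sum_comm]
        refine Finset.sum_congr rfl fun i _ => ?_
        rw [Finset.sum_comm]
        refine Finset.sum_congr rfl fun p _ => Finset.sum_congr rfl fun q _ => ?_
        rw [s'_mul s' hs1 hs2, mul_assoc]
    _ = op23 K A (Smap K A s') (op12 K A (Tmap K A) (x ⊗ₜ (y ⊗ₜ z))) := by
        rw [op12_T x y z rx, map_sum]
        refine Finset.sum_congr rfl fun i _ => ?_
        rw [op23_S s' _ _ _ (reprMul (rx2 i) ry)]
        exact (reprMul_sum (rx2 i) ry
          (fun u v => rx.left i ⊗ₜ[K] (u ⊗ₜ[K] (z * s' v)))).symm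

/-- relation 5 : `T₂₃ T₁₃ S₁₂ = S₁₂ T₂₃`. -/
lemma rel5 (s' : A →ₗ[K] A)
    (hs1 : (antipode (R := K) : A →ₗ[K] A) ∘ₗ s' = LinearMap.id)
    (hs2 : s' ∘ₗ (antipode (R := K) : A →ₗ[K] A) = LinearMap.id) :
    op23 K A (Tmap K A) ∘ₗ op13 K A (Tmap K A) ∘ₗ op12 K A (Smap K A s')
      = op12 K A (Smap K A s') ∘ₗ op23 K A (Tmap K A) := by
  refine ext_threefold' fun x y z => ?_
  set rx := ℛ K x with hrx
  set ry := ℛ K y with hry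
  set rx1 : ∀ i : A × A, Coalgebra.Repr K (rx.left i) (A × A) := fun i => ℛ K (rx.left i) with hrx1
  set rx2 : ∀ i : A × A, Coalgebra.Repr K (rx.right i) (A × A) := fun i => ℛ K (rx.right i) with hrx2
  set rx21 : ∀ i : A × A, ∀ p : A × A, Coalgebra.Repr K ((rx2 i).left p) (A × A) :=
    fun i p => ℛ K ((rx2 i).left p) with hrx21
  set rx22 : ∀ i : A × A, ∀ p : A × A, Coalgebra.Repr K ((rx2 i).right p) (A × A) :=
    fun i p => ℛ K ((rx2 i).right p) with hrx22
  simp only [LinearMap.comp_apply]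
  calc op23 K A (Tmap K A) (op13 K A (Tmap K A) (op12 K A (Smap K A s') (x ⊗ₜ (y ⊗ₜ z))))
      = ∑ i ∈ rx.index, op23 K A (Tmap K A)
          (op13 K A (Tmap K A) (rx.left i ⊗ₜ ((y * s' (rx.right i)) ⊗ₜ z))) := by
        rw [op12_S s' x y z rx, map_sum, map_sum]
    _ = ∑ i ∈ rx.index, ∑ m ∈ (rx1 i).index, op23 K A (Tmap K A)
          ((rx1 i).left m ⊗ₜ ((y * s' (rx.right i)) ⊗ₜ ((rx1 i).right m * z))) := by
        refine Finset.sum_congr rfl fun i _ => ?_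
        rw [op13_T _ _ _ (rx1 i), map_sum]
    _ = ∑ i ∈ rx.index, ∑ p ∈ (rx2 i).index, op23 K A (Tmap K A)
          (rx.left i ⊗ₜ ((y * s' ((rx2 i).right p)) ⊗ₜ ((rx2 i).left p * z))) := by
        have key := sweedler3 (K := K) (A := A)
          (op23 K A (Tmap K A) ∘ₗ
            TensorProduct.map LinearMap.id
              (TensorProduct.map (LinearMap.mulLeft K y ∘ₗ s') (LinearMap.mulRight K z)) ∘ₗ
            LinearMap.lTensor A (TensorProduct.comm K A A).toLinearMap) rx rx1 rx2
        simp only [LinearMap.comp_apply,LinearMap.lTensor_tmul, LinearEquiv.coe_coe,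
          TensorProduct.comm_tmul, TensorProduct.map_tmul, LinearMap.id_coe, id_eq,
          LinearMap.mulLeft_apply, LinearMap.mulRight_apply] at key
        exact key
    _ = ∑ i ∈ rx.index, ∑ p ∈ (rx2 i).index, ∑ q ∈ ry.index, ∑ n ∈ (rx22 i p).index,
          rx.left i ⊗ₜ[K] ((ry.left q * s' ((rx22 i p).right n)) ⊗ₜ[K]
            ((ry.right q * s' ((rx22 i p).left n)) * ((rx2 i).left p * z))) := by
        refine Finset.sum_congr rfl fun i _ => Finset.sum_congr rfl fun p _ => ?_
        rw [op23_T _ _ _ (reprMul ry (reprS' s' hs1 hs2 (rx22 i p)))]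
        exact reprMul_sum ry (reprS' s' hs1 hs2 (rx22 i p))
          (fun u v => rx.left i ⊗ₜ[K] (u ⊗ₜ[K] (v * ((rx2 i).left p * z))))
    _ = ∑ i ∈ rx.index, ∑ q ∈ ry.index, ∑ p ∈ (rx2 i).index, ∑ n ∈ (rx22 i p).index,
          rx.left i ⊗ₜ[K] ((ry.left q * s' ((rx22 i p).right n)) ⊗ₜ[K]
            ((ry.right q * s' ((rx22 i p).left n)) * ((rx2 i).left p * z))) :=
        Finset.sum_congr rfl fun i _ => Finset.sum_comm
    _ = ∑ i ∈ rx.index, ∑ q ∈ ry.index, ∑ p ∈ (rx2 i).index, ∑ m ∈ (rx21 i p).index,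
          rx.left i ⊗ₜ[K] ((ry.left q * s' ((rx2 i).right p)) ⊗ₜ[K]
            ((ry.right q * s' ((rx21 i p).right m)) * ((rx21 i p).left m * z))) := by
        refine Finset.sum_congr rfl fun i _ => Finset.sum_congr rfl fun q _ => ?_
        have key := sweedler3 (K := K) (A := A)
          (TensorProduct.mk K A (A ⊗[K] A) (rx.left i) ∘ₗ
            TensorProduct.map (LinearMap.mulLeft K (ry.left q) ∘ₗ s')
              (LinearMap.mul' K A ∘ₗ
                TensorProduct.map (LinearMap.mulLeft K (ry.right q) ∘ₗ s')
                  (LinearMap.mulRight K z)) ∘ₗ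
            LinearMap.lTensor A (TensorProduct.comm K A A).toLinearMap ∘ₗ
            (TensorProduct.comm K (A ⊗[K] A) A).toLinearMap ∘ₗ
            (TensorProduct.assoc K A A A).symm.toLinearMap) (rx2 i) (rx21 i) (rx22 i)
        simp only [LinearMap.comp_apply, LinearEquiv.coe_coe, TensorProduct.assoc_symm_tmul,
          TensorProduct.comm_tmul, LinearMap.lTensor_tmul, TensorProduct.map_tmul,
          LinearMap.mulLeft_apply, LinearMap.mulRight_apply, LinearMap.mul'_apply,
          TensorProduct.mk_apply] at key
        exact key.symm
    _ = ∑ i ∈ rx.index, ∑ q ∈ ry.index, ∑ p ∈ (rx2 i).index,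
          counit (R := K) ((rx2 i).left p) •
            (rx.left i ⊗ₜ[K] ((ry.left q * s' ((rx2 i).right p)) ⊗ₜ[K] (ry.right q * z))) := by
        refine Finset.sum_congr rfl fun i _ => Finset.sum_congr rfl fun q _ =>
          Finset.sum_congr rfl fun p _ => ?_
        calc ∑ m ∈ (rx21 i p).index,
              rx.left i ⊗ₜ[K] ((ry.left q * s' ((rx2 i).right p)) ⊗ₜ[K]
                ((ry.right q * s' ((rx21 i p).right m)) * ((rx21 i p).left m * z)))
            = ∑ m ∈ (rx21 i p).index,
              rx.left i ⊗ₜ[K] ((ry.left q * s' ((rx2 i).right p)) ⊗ₜ[K]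
                (ry.right q * (s' ((rx21 i p).right m) * (rx21 i p).left m * z))) := by
              refine Finset.sum_congr rfl fun m _ => ?_
              simp only [mul_assoc]
          _ = rx.left i ⊗ₜ[K] ((ry.left q * s' ((rx2 i).right p)) ⊗ₜ[K]
                (ry.right q * ((∑ m ∈ (rx21 i p).index,
                  s' ((rx21 i p).right m) * (rx21 i p).left m) * z))) := by
              rw [← TensorProduct.tmul_sum, ← TensorProduct.tmul_sum, ← Finset.mul_sum,
                ← Finset.sum_mul]
          _ = counit (R := K) ((rx2 i).left p) •
              (rx.left i ⊗ₜ[K] ((ry.left q * s' ((rx2 i).right p)) ⊗ₜ[K] (ry.right q * z))) := by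
              rw [sum_s'_mul s' hs1 hs2 (rx21 i p), smul_mul_assoc, one_mul, mul_smul_comm,
                TensorProduct.tmul_smul, TensorProduct.tmul_smul]
    _ = ∑ i ∈ rx.index, ∑ q ∈ ry.index,
          rx.left i ⊗ₜ[K] ((ry.left q * s' (rx.right i)) ⊗ₜ[K] (ry.right q * z)) := by
        refine Finset.sum_congr rfl fun i _ => Finset.sum_congr rfl fun q _ => ?_
        have hc := sum_counit_smul_map
          (TensorProduct.mk K A (A ⊗[K] A) (rx.left i) ∘ₗ
            (TensorProduct.mk K A A).flip (ry.right q * z) ∘ₗ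
            LinearMap.mulLeft K (ry.left q) ∘ₗ s') (rx2 i)
        simp only [LinearMap.comp_apply, LinearMap.flip_apply, TensorProduct.mk_apply,
          LinearMap.mulLeft_apply] at hc
        exact hc
    _ = op12 K A (Smap K A s') (op23 K A (Tmap K A) (x ⊗ₜ (y ⊗ₜ z))) := by
        rw [op23_T x y z ry, map_sum]
        rw [Finset.sum_congr rfl fun q _ => op12_S s' _ _ _ rx]
        exact Finset.sum_comm

/-- the dual pentagon equation for `S`. -/
lemma dpentagonS (s' : A →ₗ[K] A)
    (hs1 : (antipode (R := K) : A →ₗ[K] A) ∘ₗ s' = LinearMap.id)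
    (hs2 : s' ∘ₗ (antipode (R := K) : A →ₗ[K] A) = LinearMap.id) :
    op23 K A (Smap K A s') ∘ₗ op13 K A (Smap K A s') ∘ₗ op12 K A (Smap K A s')
      = op12 K A (Smap K A s') ∘ₗ op23 K A (Smap K A s') := by
  refine ext_threefold' fun x y z => ?_
  set rx := ℛ K x with hrx
  set ry := ℛ K y with hry
  set rx1 : ∀ i : A × A, Coalgebra.Repr K (rx.left i) (A × A) := fun i => ℛ K (rx.left i) with hrx1
  set rx2 : ∀ i : A × A, Coalgebra.Repr K (rx.right i) (A × A) := fun i => ℛ K (rx.right i) with hrx2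
  set rx21 : ∀ i : A × A, ∀ p : A × A, Coalgebra.Repr K ((rx2 i).left p) (A × A) :=
    fun i p => ℛ K ((rx2 i).left p) with hrx21
  set rx22 : ∀ i : A × A, ∀ p : A × A, Coalgebra.Repr K ((rx2 i).right p) (A × A) :=
    fun i p => ℛ K ((rx2 i).right p) with hrx22
  simp only [LinearMap.comp_apply]
  calc op23 K A (Smap K A s')
        (op13 K A (Smap K A s') (op12 K A (Smap K A s') (x ⊗ₜ (y ⊗ₜ z))))
      = ∑ i ∈ rx.index, op23 K A (Smap K A s')
          (op13 K A (Smap K A s') (rx.left i ⊗ₜ ((y * s' (rx.right i)) ⊗ₜ z))) := by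
        rw [op12_S s' x y z rx, map_sum, map_sum]
    _ = ∑ i ∈ rx.index, ∑ m ∈ (rx1 i).index, op23 K A (Smap K A s')
          ((rx1 i).left m ⊗ₜ ((y * s' (rx.right i)) ⊗ₜ (z * s' ((rx1 i).right m)))) := by
        refine Finset.sum_congr rfl fun i _ => ?_
        rw [op13_S s' _ _ _ (rx1 i), map_sum]
    _ = ∑ i ∈ rx.index, ∑ p ∈ (rx2 i).index, op23 K A (Smap K A s')
          (rx.left i ⊗ₜ ((y * s' ((rx2 i).right p)) ⊗ₜ (z * s' ((rx2 i).left p)))) := by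
        have key := sweedler3 (K := K) (A := A)
          (op23 K A (Smap K A s') ∘ₗ
            TensorProduct.map LinearMap.id
              (TensorProduct.map (LinearMap.mulLeft K y ∘ₗ s') (LinearMap.mulLeft K z ∘ₗ s')) ∘ₗ
            LinearMap.lTensor A (TensorProduct.comm K A A).toLinearMap) rx rx1 rx2
        simp only [LinearMap.comp_apply, LinearMap.lTensor_tmul, LinearEquiv.coe_coe,
          TensorProduct.comm_tmul, TensorProduct.map_tmul, LinearMap.id_coe, id_eq,
          LinearMap.mulLeft_apply] at key
        exact key
    _ = ∑ i ∈ rx.index, ∑ p ∈ (rx2 i).index, ∑ q ∈ ry.index, ∑ n ∈ (rx22 i p).index,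
          rx.left i ⊗ₜ[K] ((ry.left q * s' ((rx22 i p).right n)) ⊗ₜ[K]
            ((z * s' ((rx2 i).left p)) * s' (ry.right q * s' ((rx22 i p).left n)))) := by
        refine Finset.sum_congr rfl fun i _ => Finset.sum_congr rfl fun p _ => ?_
        rw [op23_S s' _ _ _ (reprMul ry (reprS' s' hs1 hs2 (rx22 i p)))]
        exact reprMul_sum ry (reprS' s' hs1 hs2 (rx22 i p))
          (fun u v => rx.left i ⊗ₜ[K] (u ⊗ₜ[K] ((z * s' ((rx2 i).left p)) * s' v)))
    _ = ∑ i ∈ rx.index, ∑ q ∈ ry.index, ∑ p ∈ (rx2 i).index, ∑ n ∈ (rx22 i p).index,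
          rx.left i ⊗ₜ[K] ((ry.left q * s' ((rx22 i p).right n)) ⊗ₜ[K]
            ((z * s' ((rx2 i).left p)) * (s' (s' ((rx22 i p).left n)) * s' (ry.right q)))) := by
        refine (Finset.sum_congr rfl fun i _ => Finset.sum_comm).trans ?_
        refine Finset.sum_congr rfl fun i _ => Finset.sum_congr rfl fun q _ =>
          Finset.sum_congr rfl fun p _ => Finset.sum_congr rfl fun n _ => ?_
        rw [s'_mul s' hs1 hs2]
    _ = ∑ i ∈ rx.index, ∑ q ∈ ry.index, ∑ p ∈ (rx2 i).index, ∑ m ∈ (rx21 i p).index,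
          rx.left i ⊗ₜ[K] ((ry.left q * s' ((rx2 i).right p)) ⊗ₜ[K]
            ((z * s' ((rx21 i p).left m)) *
              (s' (s' ((rx21 i p).right m)) * s' (ry.right q)))) := by
        refine Finset.sum_congr rfl fun i _ => Finset.sum_congr rfl fun q _ => ?_
        have key := sweedler3 (K := K) (A := A)
          (TensorProduct.mk K A (A ⊗[K] A) (rx.left i) ∘ₗ
            TensorProduct.map (LinearMap.mulLeft K (ry.left q) ∘ₗ s')
              (LinearMap.mul' K A ∘ₗ
                TensorProduct.map (LinearMap.mulLeft K z ∘ₗ s')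
                  (LinearMap.mulRight K (s' (ry.right q)) ∘ₗ s' ∘ₗ s')) ∘ₗ
            (TensorProduct.comm K (A ⊗[K] A) A).toLinearMap ∘ₗ
            (TensorProduct.assoc K A A A).symm.toLinearMap) (rx2 i) (rx21 i) (rx22 i)
        simp only [LinearMap.comp_apply, LinearEquiv.coe_coe, TensorProduct.assoc_symm_tmul,
          TensorProduct.comm_tmul, LinearMap.lTensor_tmul, TensorProduct.map_tmul,
          LinearMap.mulLeft_apply, LinearMap.mulRight_apply, LinearMap.mul'_apply,
          TensorProduct.mk_apply] at key
        exact key.symm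
    _ = ∑ i ∈ rx.index, ∑ q ∈ ry.index, ∑ p ∈ (rx2 i).index,
          counit (R := K) ((rx2 i).left p) •
            (rx.left i ⊗ₜ[K] ((ry.left q * s' ((rx2 i).right p)) ⊗ₜ[K]
              (z * s' (ry.right q)))) := by
        refine Finset.sum_congr rfl fun i _ => Finset.sum_congr rfl fun q _ =>
          Finset.sum_congr rfl fun p _ => ?_
        calc ∑ m ∈ (rx21 i p).index,
              rx.left i ⊗ₜ[K] ((ry.left q * s' ((rx2 i).right p)) ⊗ₜ[K]
                ((z * s' ((rx21 i p).left m)) *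
                  (s' (s' ((rx21 i p).right m)) * s' (ry.right q))))
            = ∑ m ∈ (rx21 i p).index,
              rx.left i ⊗ₜ[K] ((ry.left q * s' ((rx2 i).right p)) ⊗ₜ[K]
                (z * (s' (s' ((rx21 i p).right m) * (rx21 i p).left m) * s' (ry.right q)))) := by
              refine Finset.sum_congr rfl fun m _ => ?_
              rw [s'_mul s' hs1 hs2]
              simp only [mul_assoc]
          _ = rx.left i ⊗ₜ[K] ((ry.left q * s' ((rx2 i).right p)) ⊗ₜ[K]
                (z * ((s' (∑ m ∈ (rx21 i p).index,
                  s' ((rx21 i p).right m) * (rx21 i p).left m)) * s' (ry.right q)))) := by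
              rw [← TensorProduct.tmul_sum, ← TensorProduct.tmul_sum, ← Finset.mul_sum,
                ← Finset.sum_mul, ← map_sum]
          _ = counit (R := K) ((rx2 i).left p) •
              (rx.left i ⊗ₜ[K] ((ry.left q * s' ((rx2 i).right p)) ⊗ₜ[K]
                (z * s' (ry.right q)))) := by
              rw [sum_s'_mul s' hs1 hs2 (rx21 i p), map_smul, s'_one s' hs2, smul_mul_assoc,
                one_mul, mul_smul_comm, TensorProduct.tmul_smul, TensorProduct.tmul_smul]
    _ = ∑ i ∈ rx.index, ∑ q ∈ ry.index,
          rx.left i ⊗ₜ[K] ((ry.left q * s' (rx.right i)) ⊗ₜ[K] (z * s' (ry.right q))) := by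
        refine Finset.sum_congr rfl fun i _ => Finset.sum_congr rfl fun q _ => ?_
        have hc := sum_counit_smul_map
          (TensorProduct.mk K A (A ⊗[K] A) (rx.left i) ∘ₗ
            (TensorProduct.mk K A A).flip (z * s' (ry.right q)) ∘ₗ
            LinearMap.mulLeft K (ry.left q) ∘ₗ s') (rx2 i)
        simp only [LinearMap.comp_apply, LinearMap.flip_apply, TensorProduct.mk_apply,
          LinearMap.mulLeft_apply] at hc
        exact hc
    _ = op12 K A (Smap K A s') (op23 K A (Smap K A s') (x ⊗ₜ (y ⊗ₜ z))) := by
        rw [op23_S s' x y z ry, map_sum]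
        rw [Finset.sum_congr rfl fun q _ => op12_S s' _ _ _ rx]
        exact Finset.sum_comm

lemma sw23_sw23 : sw23 K A ∘ₗ sw23 K A = LinearMap.id :=
  ext_threefold' fun x y z => by simp [LinearMap.comp_apply, sw23_tmul]

lemma op12_comp (F G : A ⊗[K] A →ₗ[K] A ⊗[K] A) :
    op12 K A (F ∘ₗ G) = op12 K A F ∘ₗ op12 K A G := by
  refine LinearMap.ext fun v => ?_
  simp [op12, LinearMap.rTensor_comp, LinearMap.comp_apply]

lemma op23_comp (F G : A ⊗[K] A →ₗ[K] A ⊗[K] A) :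
    op23 K A (F ∘ₗ G) = op23 K A F ∘ₗ op23 K A G :=
  LinearMap.lTensor_comp A F G

lemma op13_comp (F G : A ⊗[K] A →ₗ[K] A ⊗[K] A) :
    op13 K A (F ∘ₗ G) = op13 K A F ∘ₗ op13 K A G := by
  refine LinearMap.ext fun v => ?_
  have h := LinearMap.congr_fun (sw23_sw23 (K := K) (A := A)) (op12 K A G (sw23 K A v))
  simp only [LinearMap.comp_apply, LinearMap.id_coe, id_eq] at h
  simp only [op13, LinearMap.comp_apply, op12_comp]
  rw [h]

end blocks

end HopfYB

/-- For a Hopf algebra `H` with invertible antipode (with inverse `s'`), the composite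
`R := S ∘ T`, i.e. `R(x⊗y) = x₍₁₎ ⊗ x₍₃₎·y·s'(x₍₂₎)`, satisfies the Yang–Baxter equation
`R₁₂R₁₃R₂₃ = R₂₃R₁₃R₁₂`. -/
theorem hopf_ST_yang_baxter
    {k : Type*} [Field k] {H : Type*} [Semiring H] [HopfAlgebra k H]
    (s' : H →ₗ[k] H)
    (hs1 : (HopfAlgebra.antipode k : H →ₗ[k] H) ∘ₗ s' = LinearMap.id)
    (hs2 : s' ∘ₗ (HopfAlgebra.antipode k : H →ₗ[k] H) = LinearMap.id) :
    op12 k H (Smap k H s' ∘ₗ Tmap k H) ∘ₗ op13 k H (Smap k H s' ∘ₗ Tmap k H) ∘ₗ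
        op23 k H (Smap k H s' ∘ₗ Tmap k H)
      = op23 k H (Smap k H s' ∘ₗ Tmap k H) ∘ₗ op13 k H (Smap k H s' ∘ₗ Tmap k H) ∘ₗ
        op12 k H (Smap k H s' ∘ₗ Tmap k H) := by
  have e3 : ∀ w, op23 k H (Tmap k H) (op13 k H (Smap k H s') w)
      = op13 k H (Smap k H s') (op23 k H (Tmap k H) w) := fun w => by
    have := LinearMap.congr_fun (HopfYB.rel3 (K := k) (A := H) s') w
    simpa [LinearMap.comp_apply] using this
  have e3' : ∀ w, op13 k H (Tmap k H) (op23 k H (Smap k H s') w)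
      = op23 k H (Smap k H s') (op13 k H (Tmap k H) w) := fun w => by
    have := LinearMap.congr_fun (HopfYB.rel3' (K := k) (A := H) s') w
    simpa [LinearMap.comp_apply] using this
  have e4 : ∀ w, op12 k H (Tmap k H) (op13 k H (Smap k H s') (op23 k H (Smap k H s') w))
      = op23 k H (Smap k H s') (op12 k H (Tmap k H) w) := fun w => by
    have := LinearMap.congr_fun (HopfYB.rel4 (K := k) (A := H) s' hs1 hs2) w
    simpa [LinearMap.comp_apply] using this
  have e5 : ∀ w, op23 k H (Tmap k H) (op13 k H (Tmap k H) (op12 k H (Smap k H s') w))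
      = op12 k H (Smap k H s') (op23 k H (Tmap k H) w) := fun w => by
    have := LinearMap.congr_fun (HopfYB.rel5 (K := k) (A := H) s' hs1 hs2) w
    simpa [LinearMap.comp_apply] using this
  have ep : ∀ w, op12 k H (Tmap k H) (op13 k H (Tmap k H) (op23 k H (Tmap k H) w))
      = op23 k H (Tmap k H) (op12 k H (Tmap k H) w) := fun w => by
    have := LinearMap.congr_fun (HopfYB.pentagonT (K := k) (A := H)) w
    simpa [LinearMap.comp_apply] using this
  have ed : ∀ w, op23 k H (Smap k H s') (op13 k H (Smap k H s') (op12 k H (Smap k H s') w))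
      = op12 k H (Smap k H s') (op23 k H (Smap k H s') w) := fun w => by
    have := LinearMap.congr_fun (HopfYB.dpentagonS (K := k) (A := H) s' hs1 hs2) w
    simpa [LinearMap.comp_apply] using this
  refine LinearMap.ext fun v => ?_
  simp only [HopfYB.op12_comp, HopfYB.op13_comp, HopfYB.op23_comp, LinearMap.comp_apply]
  rw [e3', e4, ep, e3, e5, ed]
end
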